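/- arXiv:math/0602345 — 7 statements merged into one kernel-verified Lean document; each statement's English description precedes it below -/
import Mathlib

section
/- Let N ≥ 1 and let V₁,…,V_d : ℝ^e → ℝ^e be bounded vector fields with N bounded derivatives. Let x : [0,1] → ℝ^d be Lipschitz and y = π(0, y₀; x). Then for all 0 ≤ s ≤ t ≤ 1: y_{s,t} − I[y_s, N, S_N(x)_{s,t}] = Σ_{i₁,…,i_N ∈ {1,…,d}} ∫_{s<r₁<⋯<r_N<t} [ V_{i₁}⋯V_{i_N}H(y_{r₁}) − V_{i₁}⋯V_{i_N}H(y_s) ] (x^{i₁})'(r₁)⋯(x^{i_N})'(r_N) dr₁⋯dr_N. -/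
open MeasureTheory Set

/-- Iterated integral `g^{k,i₁,…,i_k}_{s,t} = ∫_{s<r₁<⋯<r_k<t} dx^{i₁}⋯dx^{i_k}` of the
path with derivative `x'`, indexed by the word `[i₁,…,i_k]`. -/
noncomputable def iterInt {d : ℕ} (x' : ℝ → EuclideanSpace ℝ (Fin d)) :
    List (Fin d) → ℝ → ℝ → ℝ
  | [], _, _ => 1
  | i :: w, s, t => ∫ r in s..t, x' r i * iterInt x' w r t

/-- Iterated application `V_{i₁}⋯V_{i_k} f` of vector fields as first-order differential
operators, `(V f)(y) = Df(y)·V(y)`. -/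
noncomputable def vfOp {E F : Type*} [NormedAddCommGroup E] [NormedSpace ℝ E]
    [NormedAddCommGroup F] [NormedSpace ℝ F] {d : ℕ}
    (V : Fin d → E → E) : List (Fin d) → (E → F) → E → F
  | [], f, y => f y
  | i :: w, f, y => fderiv ℝ (vfOp V w f) y (V i y)

/-- The step-`N` Euler scheme increment
`I[y,N,g] = Σ_{k=1}^N Σ_{i₁,…,i_k} V_{i₁}⋯V_{i_k}H(y) · g^{k,i₁,…,i_k}`. -/
noncomputable def euler {d e : ℕ}
    (V : Fin d → EuclideanSpace ℝ (Fin e) → EuclideanSpace ℝ (Fin e)) (N : ℕ)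
    (g : List (Fin d) → ℝ) (y : EuclideanSpace ℝ (Fin e)) : EuclideanSpace ℝ (Fin e) :=
  ∑ k ∈ Finset.Icc 1 N, ∑ w : Fin k → Fin d, g (List.ofFn w) • vfOp V (List.ofFn w) id y

/-- The iterated integral `∫_{s<r₁<⋯<r_k<t} G(r₁) dx^{i₁}(r₁)⋯dx^{i_k}(r_k)` with an
integrand `G` evaluated at the innermost time `r₁`. -/
noncomputable def remInt {d : ℕ} {F : Type*} [NormedAddCommGroup F] [NormedSpace ℝ F]
    (x' : ℝ → EuclideanSpace ℝ (Fin d)) (G : ℝ → F) : List (Fin d) → ℝ → ℝ → F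
  | [], _, _ => 0
  | i :: w, s, t => ∫ r in s..t, (x' r i * iterInt x' w r t) • G r

/-- `x` is a Lipschitz path on `[0,1]` with (a.e. defined, bounded measurable)
derivative `x'`, encoded via the fundamental theorem of calculus. -/
def IsLipPath {d : ℕ} (x x' : ℝ → EuclideanSpace ℝ (Fin d)) : Prop :=
  Measurable x' ∧ (∃ L : ℝ, ∀ r, ‖x' r‖ ≤ L) ∧
    ∀ t ∈ Set.Icc (0:ℝ) 1, x t = x 0 + ∫ r in (0:ℝ)..t, x' r

/-- `y` is a Lipschitz solution on `[0,1]` of the controlled ODE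
`dy = Σᵢ Vᵢ(y) dxⁱ` started at `y₀`. -/
def IsODESol {d e : ℕ} (V : Fin d → EuclideanSpace ℝ (Fin e) → EuclideanSpace ℝ (Fin e))
    (x' : ℝ → EuclideanSpace ℝ (Fin d)) (y₀ : EuclideanSpace ℝ (Fin e))
    (y : ℝ → EuclideanSpace ℝ (Fin e)) : Prop :=
  (∃ K : NNReal, LipschitzOnWith K y (Set.Icc 0 1)) ∧ y 0 = y₀ ∧
    ∀ t ∈ Set.Icc (0:ℝ) 1, y t = y₀ + ∫ r in (0:ℝ)..t, ∑ i, x' r i • V i (y r)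

/-!
Write `Φ_w = V_{i₁}⋯V_{i_k}H` for a word `w = i₁⋯i_k`. Along the solution, the chain rule gives
`Φ_w(y_r) - Φ_w(y_s) = Σ_j ∫_s^r Φ_{jw}(y_u) dx^j_u`. Substituting this into the innermost
variable of the remainder attached to `w` and exchanging the order of integration over the
triangle `s < u < r < t` turns that remainder into the sum over `j` of the full iterated
integrals of `Φ_{jw}(y)`; each of these splits into the Euler term `Φ_{jw}(y_s) g^{jw}_{s,t}`
plus the remainder attached to `jw`. Starting from `y_t - y_s = Σ_j ∫_s^t V_j(y_r) dx^j_r` and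
iterating up to words of length `N` gives the formula. Since `y` is only Lipschitz, the chain
rule is obtained from the fundamental theorem of calculus for absolutely continuous functions.
-/

section Calculus

variable {E F : Type*} [NormedAddCommGroup E] [NormedSpace ℝ E] [NormedAddCommGroup F]
  [NormedSpace ℝ F]

theorem lipschitzOnWith_of_eq_add_integral {z g : ℝ → E} {a b C : ℝ}
    (hz : ∀ r ∈ Icc a b, z r = z a + ∫ u in a..r, g u)
    (hg : IntervalIntegrable g volume a b) (hC : ∀ r ∈ Icc a b, ‖g r‖ ≤ C) :
    LipschitzOnWith (Real.toNNReal C) z (Icc a b) := by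
  refine LipschitzOnWith.of_dist_le_mul fun u hu v hv => ?_
  have hg_sub : ∀ r ∈ Icc a b, IntervalIntegrable g volume a r := fun r hr =>
    hg.mono_set (uIcc_subset_uIcc left_mem_uIcc (Icc_subset_uIcc hr))
  rw [dist_eq_norm, hz u hu, hz v hv, add_sub_add_left_eq_sub,
    intervalIntegral.integral_interval_sub_left (hg_sub u hu) (hg_sub v hv),
    Real.dist_eq]
  refine intervalIntegral.norm_integral_le_of_norm_le_const (f := g) (C := C.toNNReal)
    fun r hr => ?_
  exact (hC r (uIcc_subset_Icc hv hu (uIoc_subset_uIcc hr))).trans (Real.le_coe_toNNReal C)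

theorem sub_eq_integral_fderiv_apply [CompleteSpace E] [CompleteSpace F] {f : E → F}
    (hf : ContDiff ℝ 1 f) {z g : ℝ → E} {a b C : ℝ} (hab : a ≤ b)
    (hz : ∀ r ∈ Icc a b, z r = z a + ∫ u in a..r, g u)
    (hg : IntervalIntegrable g volume a b) (hC : ∀ r ∈ Icc a b, ‖g r‖ ≤ C) :
    f (z b) - f (z a) = ∫ r in a..b, fderiv ℝ f (z r) (g r) := by
  have hz_lip := lipschitzOnWith_of_eq_add_integral hz hg hC
  have hDf : ContinuousOn (fun r => fderiv ℝ f (z r)) (Icc a b) :=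
    (hf.continuous_fderiv one_ne_zero).comp_continuousOn hz_lip.continuousOn
  obtain ⟨M, hM⟩ := isCompact_Icc.exists_bound_of_continuousOn hDf
  set φ : ℝ → F := fun r => fderiv ℝ f (z r) (g r)
  have hφM : ∀ r ∈ Icc a b, ‖φ r‖ ≤ M * C := fun r hr =>
    ((fderiv ℝ f (z r)).le_of_opNorm_le (hM r hr) (g r)).trans <|
      mul_le_mul_of_nonneg_left (hC r hr) ((norm_nonneg _).trans (hM r hr))
  have hIoc : uIoc a b ⊆ Icc a b := uIoc_subset_uIcc.trans (uIcc_of_le hab).subset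
  have hφ : IntervalIntegrable φ volume a b := by
    refine (intervalIntegrable_const (c := M * C)).mono_fun' ?_ ?_
    · exact (ContinuousLinearMap.apply ℝ F).aestronglyMeasurable_comp₂
        hg.aestronglyMeasurable_restrict_uIoc
        ((hDf.mono hIoc).aestronglyMeasurable measurableSet_uIoc)
    · filter_upwards [ae_restrict_mem measurableSet_uIoc] with r hr using hφM r (hIoc hr)
  obtain ⟨K, hK⟩ := hf.locallyLipschitz.locallyLipschitzOn.exists_lipschitzOnWith_of_compact
    (isCompact_Icc.image_of_continuousOn hz_lip.continuousOn)
  -- `f ∘ z - ∫ φ` is absolutely continuous with a.e. vanishing derivative, hence constant.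
  have hac : AbsolutelyContinuousOnInterval (fun r => f (z r) - ∫ u in a..r, φ u) a b := by
    apply LipschitzOnWith.absolutelyContinuousOnInterval
    rw [uIcc_of_le hab]
    exact (hK.comp hz_lip (mapsTo_image _ _)).sub
      (lipschitzOnWith_of_eq_add_integral (by simp) hφ hφM)
  have hderiv : ∀ᵐ r, r ∈ uIcc a b →
      HasDerivAt (fun r => f (z r) - ∫ u in a..r, φ u) 0 r := by
    filter_upwards [hg.ae_hasDerivAt_integral, hφ.ae_hasDerivAt_integral,
      (Ioo_ae_eq_Icc (a := a) (b := b) (μ := volume)).mem_iff] with r hgr hφr hIoo hr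
    have hr' : r ∈ Ioo a b := hIoo.2 (uIcc_of_le hab ▸ hr)
    have hzr : HasDerivAt z (g r) r := by
      refine ((hgr hr a left_mem_uIcc).const_add (z a)).congr_of_eventuallyEq ?_
      filter_upwards [Ioo_mem_nhds hr'.1 hr'.2] with u hu using hz u (Ioo_subset_Icc_self hu)
    have := ((hf.differentiable one_ne_zero (z r)).hasFDerivAt.comp_hasDerivAt r hzr).sub
      (hφr hr a left_mem_uIcc)
    rwa [sub_self] at this
  obtain ⟨c, hc⟩ := hac.const_of_ae_hasDerivAt_zero hderiv
  have := (hc b right_mem_uIcc).trans (hc a left_mem_uIcc).symm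
  simp only [intervalIntegral.integral_same, sub_zero] at this
  rw [← this, sub_sub_cancel]

theorem integral_smul_integral_swap [CompleteSpace E] {K : ℝ → ℝ} {h : ℝ → E} {s t : ℝ}
    (hst : s ≤ t)
    (hK : IntervalIntegrable K volume s t) (hh : IntervalIntegrable h volume s t) :
    ∫ r in s..t, K r • ∫ u in s..r, h u = ∫ u in s..t, (∫ r in u..t, K r) • h u := by
  have hint : Integrable ({p : ℝ × ℝ | p.2 < p.1}.indicator fun p => K p.1 • h p.2)
      ((volume.restrict (Ioc s t)).prod (volume.restrict (Ioc s t))) :=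
    (hK.1.smul_prod hh.1).indicator (measurableSet_lt measurable_snd measurable_fst)
  rw [intervalIntegral.integral_of_le hst, intervalIntegral.integral_of_le hst]
  convert integral_integral_swap
    (f := fun r u => {p : ℝ × ℝ | p.2 < p.1}.indicator (fun p => K p.1 • h p.2) (r, u)) hint
    using 1
  · refine integral_congr_ae ?_
    filter_upwards [ae_restrict_mem measurableSet_Ioc] with r hr
    have hset : Iio r ∩ Ioc s t = Ioo s r := by
      ext u
      simp only [mem_inter_iff, mem_Iio, mem_Ioc, mem_Ioo]
      exact ⟨fun h => ⟨h.2.1, h.1⟩, fun h => ⟨h.2, h.1, h.2.le.trans hr.2⟩⟩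
    rw [intervalIntegral.integral_of_le hr.1.le, ← integral_smul, integral_Ioc_eq_integral_Ioo,
      ← hset, ← Measure.restrict_restrict measurableSet_Iio,
      ← integral_indicator measurableSet_Iio]
    rfl
  · refine integral_congr_ae ?_
    filter_upwards [ae_restrict_mem measurableSet_Ioc] with u hu
    have hset : Ioi u ∩ Ioc s t = Ioc u t := by
      ext r
      simp only [mem_inter_iff, mem_Ioi, mem_Ioc]
      exact ⟨fun h => ⟨h.1, h.2.2⟩, fun h => ⟨h.1, hu.1.trans h.1, h.2⟩⟩
    rw [intervalIntegral.integral_of_le hu.2, ← integral_smul_const,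
      ← hset, ← Measure.restrict_restrict measurableSet_Ioi,
      ← integral_indicator measurableSet_Ioi]
    rfl

end Calculus

section IteratedIntegrals

variable {d : ℕ} {x' : ℝ → EuclideanSpace ℝ (Fin d)} {F : Type*} [NormedAddCommGroup F]
  [NormedSpace ℝ F]

theorem continuous_iterInt (hx' : ∀ i a b, IntervalIntegrable (fun r => x' r i) volume a b)
    (w : List (Fin d)) (t : ℝ) : Continuous fun r => iterInt x' w r t := by
  induction w with
  | nil => exact continuous_const
  | cons i w ih =>
    have hG : ∀ a b, IntervalIntegrable (fun u => x' u i * iterInt x' w u t) volume a b :=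
      fun a b => (hx' i a b).mul_continuousOn ih.continuousOn
    exact (intervalIntegral.continuous_primitive hG t).neg.congr fun r =>
      (intervalIntegral.integral_symm t r).symm

theorem intervalIntegrable_mul_iterInt
    (hx' : ∀ i a b, IntervalIntegrable (fun r => x' r i) volume a b)
    (i : Fin d) (w : List (Fin d)) (t a b : ℝ) :
    IntervalIntegrable (fun r => x' r i * iterInt x' w r t) volume a b :=
  (hx' i a b).mul_continuousOn (continuous_iterInt hx' w t).continuousOn

theorem intervalIntegrable_sum_smul
    (hx' : ∀ i a b, IntervalIntegrable (fun r => x' r i) volume a b) {Ψ : Fin d → ℝ → F}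
    {a b : ℝ} (hΨ : ∀ j, ContinuousOn (Ψ j) (uIcc a b)) :
    IntervalIntegrable (fun u => ∑ j, x' u j • Ψ j u) volume a b := by
  simpa only [Finset.sum_fn] using
    IntervalIntegrable.sum Finset.univ fun j _ => (hx' j a b).smul_continuousOn (hΨ j)

theorem remInt_cons_eq_iterInt_smul_add [CompleteSpace F]
    (hx' : ∀ i a b, IntervalIntegrable (fun r => x' r i) volume a b)
    {G : ℝ → F} {s t : ℝ} (hG : ContinuousOn G (uIcc s t)) (i : Fin d) (w : List (Fin d)) :
    remInt x' G (i :: w) s t =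
      iterInt x' (i :: w) s t • G s + remInt x' (fun r => G r - G s) (i :: w) s t := by
  have hK := intervalIntegrable_mul_iterInt hx' i w t s t
  have hKG : IntervalIntegrable (fun r => (x' r i * iterInt x' w r t) • (G r - G s)) volume s t :=
    hK.smul_continuousOn (hG.sub continuousOn_const)
  simp only [remInt, iterInt]
  rw [← intervalIntegral.integral_smul_const,
    ← intervalIntegral.integral_add (hK.smul_continuousOn continuousOn_const) hKG]
  simp only [← smul_add, add_sub_cancel]

theorem remInt_cons_sub_eq_sum_remInt [CompleteSpace F]
    (hx' : ∀ i a b, IntervalIntegrable (fun r => x' r i) volume a b)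
    {G : ℝ → F} {Ψ : Fin d → ℝ → F} {s t : ℝ} (hst : s ≤ t)
    (hΨ : ∀ j, ContinuousOn (Ψ j) (uIcc s t))
    (hG : ∀ r ∈ Icc s t, G r - G s = ∫ u in s..r, ∑ j, x' u j • Ψ j u)
    (i : Fin d) (w : List (Fin d)) :
    remInt x' (fun r => G r - G s) (i :: w) s t = ∑ j, remInt x' (Ψ j) (j :: i :: w) s t := by
  calc remInt x' (fun r => G r - G s) (i :: w) s t
      = ∫ r in s..t, (x' r i * iterInt x' w r t) • ∫ u in s..r, ∑ j, x' u j • Ψ j u :=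
        intervalIntegral.integral_congr fun r hr => by
          simp only [hG r (uIcc_of_le hst ▸ hr)]
    _ = ∫ u in s..t, iterInt x' (i :: w) u t • ∑ j, x' u j • Ψ j u :=
        integral_smul_integral_swap hst (intervalIntegrable_mul_iterInt hx' i w t s t)
          (intervalIntegrable_sum_smul hx' hΨ)
    _ = ∑ j, remInt x' (Ψ j) (j :: i :: w) s t := by
        simp only [remInt, Finset.smul_sum, smul_smul, mul_comm (iterInt x' (i :: w) _ t)]
        exact intervalIntegral.integral_finsetSum fun j _ =>
          (intervalIntegrable_mul_iterInt hx' j (i :: w) t s t).smul_continuousOn (hΨ j)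

end IteratedIntegrals

section VectorFieldOperators

variable {E F : Type*} [NormedAddCommGroup E] [NormedSpace ℝ E] [NormedAddCommGroup F]
  [NormedSpace ℝ F] {d : ℕ} {V : Fin d → E → E}

theorem contDiff_vfOp {N : ℕ} (hV : ∀ i, ContDiff ℝ (N : ℕ∞) (V i)) {f : E → F}
    (hf : ContDiff ℝ (N : ℕ∞) f) :
    ∀ (w : List (Fin d)) (k : ℕ), w.length + k ≤ N → ContDiff ℝ (k : ℕ∞) (vfOp V w f)
  | [], k, hk => hf.of_le (by exact_mod_cast (by simpa using hk))
  | i :: w, k, hk => by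
    have hk' : w.length + (k + 1) ≤ N := by simp only [List.length_cons] at hk; omega
    exact ((contDiff_vfOp hV hf w (k + 1) hk').fderiv_right (by exact_mod_cast le_rfl)).clm_apply
      ((hV i).of_le (by exact_mod_cast (by omega : k ≤ N)))

theorem continuous_vfOp {N : ℕ} (hV : ∀ i, ContDiff ℝ (N : ℕ∞) (V i)) {f : E → F}
    (hf : ContDiff ℝ (N : ℕ∞) f) {w : List (Fin d)} (hw : w.length ≤ N) :
    Continuous (vfOp V w f) :=
  (contDiff_vfOp hV hf w 0 hw).continuous

theorem vfOp_singleton_id (i : Fin d) (y : E) : vfOp V [i] id y = V i y := by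
  simp only [vfOp, id_eq, fderiv_fun_id, ContinuousLinearMap.id_apply]

theorem fderiv_vfOp_sum_smul (w : List (Fin d)) (f : E → F) (c : Fin d → ℝ) (y : E) :
    fderiv ℝ (vfOp V w f) y (∑ j, c j • V j y) = ∑ j, c j • vfOp V (j :: w) f y := by
  simp only [map_sum, map_smul]
  rfl

end VectorFieldOperators

section Words

theorem sum_ofFn_succ {M : Type*} [AddCommMonoid M] {d n : ℕ} (F : List (Fin d) → M) :
    ∑ w : Fin (n + 1) → Fin d, F (List.ofFn w) =
      ∑ w : Fin n → Fin d, ∑ j, F (j :: List.ofFn w) := by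
  rw [← (Fin.consEquiv fun _ => Fin d).sum_comp, Fintype.sum_prod_type, Finset.sum_comm]
  simp [Fin.consEquiv, List.ofFn_succ]

/-- `A w`, `c w` and `D w` stand for the full iterated integral, the Euler term and the
remainder attached to the word `w`. -/
theorem sub_sum_words_eq_of_expansion {M : Type*} [AddCommGroup M] {d N : ℕ} (hN : 0 < N)
    (A c D : List (Fin d) → M) (v : M) (hv : v = ∑ j, A [j])
    (hA : ∀ w : List (Fin d), w ≠ [] → w.length ≤ N → A w = c w + D w)
    (hD : ∀ w : List (Fin d), w ≠ [] → w.length < N → D w = ∑ j, A (j :: w)) :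
    v - ∑ k ∈ Finset.Icc 1 N, ∑ w : Fin k → Fin d, c (List.ofFn w) =
      ∑ w : Fin N → Fin d, D (List.ofFn w) := by
  induction N, hN using Nat.le_induction with
  | base =>
    simp only [Finset.Icc_self, Finset.sum_singleton, sum_ofFn_succ, Fintype.sum_unique,
      List.ofFn_zero, hv, ← Finset.sum_sub_distrib]
    exact Finset.sum_congr rfl fun j _ => by
      rw [hA [j] (List.cons_ne_nil _ _) le_rfl, add_sub_cancel_left]
  | succ n hn ih =>
    rw [Finset.sum_Icc_succ_top (by omega), ← sub_sub,
      ih (fun w hw hlen => hA w hw (by omega)) (fun w hw hlen => hD w hw (by omega)),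
      sum_ofFn_succ, sum_ofFn_succ, ← Finset.sum_sub_distrib]
    refine Finset.sum_congr rfl fun w _ => ?_
    rw [hD _ (by simp; omega) (by simp), ← Finset.sum_sub_distrib]
    refine Finset.sum_congr rfl fun j _ => ?_
    rw [hA _ (List.cons_ne_nil _ _) (by simp), add_sub_cancel_left]

end Words

section ControlledODE

variable {E : Type*} [NormedAddCommGroup E] [NormedSpace ℝ E] [CompleteSpace E] {d N : ℕ}
  {V : Fin d → E → E} {x' : ℝ → EuclideanSpace ℝ (Fin d)} {y : ℝ → E} {s t C : ℝ}

theorem remInt_cons_sub_vfOp_eq_sum (hV : ∀ i, ContDiff ℝ (N : ℕ∞) (V i))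
    (hx' : ∀ i a b, IntervalIntegrable (fun r => x' r i) volume a b)
    (hst : s ≤ t) (hy : ContinuousOn y (Icc s t))
    (hy_eq : ∀ r ∈ Icc s t, y r = y s + ∫ u in s..r, ∑ j, x' u j • V j (y u))
    (hC : ∀ r ∈ Icc s t, ‖∑ j, x' r j • V j (y r)‖ ≤ C)
    (i : Fin d) (w : List (Fin d)) (hw : (i :: w).length < N) :
    remInt x' (fun r => vfOp V (i :: w) id (y r) - vfOp V (i :: w) id (y s)) (i :: w) s t =
      ∑ j, remInt x' (fun r => vfOp V (j :: i :: w) id (y r)) (j :: i :: w) s t := by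
  rw [← uIcc_of_le hst] at hy
  refine remInt_cons_sub_eq_sum_remInt hx' hst (fun j => ?_) (fun r hr => ?_) i w
  · exact (continuous_vfOp (w := j :: i :: w) hV contDiff_id hw).comp_continuousOn hy
  · have hsub : Icc s r ⊆ Icc s t := Icc_subset_Icc_right hr.2
    have hg : IntervalIntegrable (fun u => ∑ j, x' u j • V j (y u)) volume s r :=
      intervalIntegrable_sum_smul hx' fun j => (hV j).continuous.comp_continuousOn
        (hy.mono (uIcc_subset_uIcc_left (Icc_subset_uIcc hr)))
    have hf : ContDiff ℝ 1 (vfOp V (i :: w) (id : E → E)) := by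
      exact_mod_cast contDiff_vfOp hV contDiff_id (i :: w) 1 hw
    rw [sub_eq_integral_fderiv_apply hf hr.1 (fun u hu => hy_eq u (hsub hu)) hg
      (fun u hu => hC u (hsub hu))]
    simp only [fderiv_vfOp_sum_smul]

end ControlledODE

theorem IsLipPath.intervalIntegrable_apply {d : ℕ} {x x' : ℝ → EuclideanSpace ℝ (Fin d)}
    (hx : IsLipPath x x') (i : Fin d) (a b : ℝ) :
    IntervalIntegrable (fun r => x' r i) volume a b := by
  obtain ⟨hx'_meas, ⟨L, hL⟩, -⟩ := hx
  exact (intervalIntegrable_const (c := L)).mono_fun' (by fun_prop)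
    (ae_of_all _ fun r => (PiLp.norm_apply_le _ _).trans (hL r))

theorem IsODESol.eq_add_integral {d e : ℕ}
    {V : Fin d → EuclideanSpace ℝ (Fin e) → EuclideanSpace ℝ (Fin e)}
    {x' : ℝ → EuclideanSpace ℝ (Fin d)} {y₀ : EuclideanSpace ℝ (Fin e)}
    {y : ℝ → EuclideanSpace ℝ (Fin e)} (hy : IsODESol V x' y₀ y)
    (hV : ∀ i, Continuous (V i))
    (hx' : ∀ i a b, IntervalIntegrable (fun r => x' r i) volume a b)
    {s r : ℝ} (hs : 0 ≤ s) (hsr : s ≤ r) (hr : r ≤ 1) :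
    y r = y s + ∫ u in s..r, ∑ i, x' u i • V i (y u) := by
  obtain ⟨⟨K, hy_lip⟩, -, hy_eq⟩ := hy
  have hg : IntervalIntegrable (fun u => ∑ i, x' u i • V i (y u)) volume 0 1 :=
    intervalIntegrable_sum_smul hx' fun i => (hV i).comp_continuousOn <| by
      rw [uIcc_of_le zero_le_one]; exact hy_lip.continuousOn
  have hg_sub : ∀ u ∈ Icc (0 : ℝ) 1,
      IntervalIntegrable (fun u => ∑ i, x' u i • V i (y u)) volume 0 u := fun u hu =>
    hg.mono_set (uIcc_subset_uIcc left_mem_uIcc (Icc_subset_uIcc hu))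
  have hs01 : s ∈ Icc (0 : ℝ) 1 := ⟨hs, hsr.trans hr⟩
  have hr01 : r ∈ Icc (0 : ℝ) 1 := ⟨hs.trans hsr, hr⟩
  rw [hy_eq r hr01, hy_eq s hs01,
    ← intervalIntegral.integral_interval_sub_left (hg_sub r hr01) (hg_sub s hs01)]
  abel

/-- For `Lip^N` vector fields and a Lipschitz driving path, the remainder
of the step-`N` Euler scheme is the iterated integral, over the `N`-simplex, of the
increment of `V_{i₁}⋯V_{i_N}H` along the solution. -/
theorem statement2 {d e N : ℕ} (hN : 0 < N)
    (V : Fin d → EuclideanSpace ℝ (Fin e) → EuclideanSpace ℝ (Fin e)) (B : ℝ)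
    (hV : ∀ i, ContDiff ℝ (N : ℕ∞) (V i))
    (hVb : ∀ i, ∀ k ≤ N, ∀ y, ‖iteratedFDeriv ℝ k (V i) y‖ ≤ B)
    (x x' : ℝ → EuclideanSpace ℝ (Fin d)) (hx : IsLipPath x x')
    (y₀ : EuclideanSpace ℝ (Fin e)) (y : ℝ → EuclideanSpace ℝ (Fin e))
    (hy : IsODESol V x' y₀ y) :
    ∀ s t : ℝ, 0 ≤ s → s ≤ t → t ≤ 1 →
      y t - y s - euler V N (fun w => iterInt x' w s t) (y s) =
        ∑ w : Fin N → Fin d,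
          remInt x'
            (fun r => vfOp V (List.ofFn w) id (y r) - vfOp V (List.ofFn w) id (y s))
            (List.ofFn w) s t := by
  intro s t hs hst ht
  have hx' := hx.intervalIntegrable_apply
  have hy_st : ∀ r ∈ Icc s t, y r = y s + ∫ u in s..r, ∑ j, x' u j • V j (y u) :=
    fun r hr => hy.eq_add_integral (fun j => (hV j).continuous) hx' hs hr.1 (hr.2.trans ht)
  obtain ⟨-, ⟨L, hL⟩, -⟩ := hx
  obtain ⟨⟨K, hy_lip⟩, -, -⟩ := hy
  have hy_cont : ContinuousOn y (uIcc s t) :=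
    hy_lip.continuousOn.mono (uIcc_of_le hst ▸ Icc_subset_Icc hs ht)
  have hC : ∀ r, ‖∑ j, x' r j • V j (y r)‖ ≤ ∑ _j : Fin d, L * B := fun r =>
    (norm_sum_le _ _).trans <| Finset.sum_le_sum fun j _ => by
      rw [norm_smul]
      refine mul_le_mul ((PiLp.norm_apply_le _ _).trans (hL r)) ?_ (norm_nonneg _)
        ((norm_nonneg _).trans (hL r))
      simpa using hVb j 0 (Nat.zero_le N) (y r)
  refine sub_sum_words_eq_of_expansion hN
    (fun w => remInt x' (fun r => vfOp V w id (y r)) w s t)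
    (fun w => iterInt x' w s t • vfOp V w id (y s))
    (fun w => remInt x' (fun r => vfOp V w id (y r) - vfOp V w id (y s)) w s t)
    (y t - y s) ?_ ?_ ?_
  · rw [hy_st t ⟨hst, le_rfl⟩, add_sub_cancel_left,
      intervalIntegral.integral_finsetSum (f := fun j u => x' u j • V j (y u)) fun j _ =>
        (hx' j s t).smul_continuousOn ((hV j).continuous.comp_continuousOn hy_cont)]
    simp only [remInt, iterInt, mul_one, vfOp_singleton_id]
  · rintro (_ | ⟨i, w⟩) hw hlen
    · exact absurd rfl hw
    · exact remInt_cons_eq_iterInt_smul_add hx'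
        ((continuous_vfOp hV contDiff_id hlen).comp_continuousOn hy_cont) i w
  · rintro (_ | ⟨i, w⟩) hw hlen
    · exact absurd rfl hw
    · exact remInt_cons_sub_vfOp_eq_sum hV hx' hst (uIcc_of_le hst ▸ hy_cont) hy_st
        (fun r _ => hC r) i w hlen
end

section
/- Let N ≥ 1, let V₁,…,V_d : ℝ^e → ℝ^e be bounded vector fields with N bounded derivatives, let x : [0,1] → ℝ^d be Lipschitz, y = π(0, y₀; x), and let f : ℝ^e → ℝ be smooth (C^∞). Then for all 0 ≤ s ≤ t ≤ 1: f(y_t) = f(y_s) + Σ_{k=1}^{N−1} Σ_{i₁,…,i_k ∈ {1,…,d}} V_{i₁}⋯V_{i_k}f(y_s) · g^{k,i₁,…,i_k}_{s,t} + Σ_{i₁,…,i_N ∈ {1,…,d}} ∫_{s<r₁<⋯<r_N<t} V_{i₁}⋯V_{i_N}f(y_{r₁}) (x^{i₁})'(r₁)⋯(x^{i_N})'(r_N) dr₁⋯dr_N. -/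
open MeasureTheory Set

section Aux
open intervalIntegral


lemma II_of_bdd {E : Type*} [NormedAddCommGroup E] {f : ℝ → E} {a b : ℝ} (hab : a ≤ b)
    (hm : AEStronglyMeasurable f (volume.restrict (Set.Ioc a b)))
    (C : ℝ) (hC : ∀ u ∈ Set.Ioc a b, ‖f u‖ ≤ C) : IntervalIntegrable f volume a b := by
  rw [intervalIntegrable_iff_integrableOn_Ioc_of_le hab]
  refine Integrable.mono' (integrable_const C) hm ?_
  exact (ae_restrict_iff' measurableSet_Ioc).2 (Filter.Eventually.of_forall hC)

lemma coord_abs_le_norm {d : ℕ} (v : EuclideanSpace ℝ (Fin d)) (i : Fin d) : |v i| ≤ ‖v‖ := by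
  rw [EuclideanSpace.norm_eq]
  have h1 : |v i| ^ 2 ≤ ∑ j : Fin d, ‖v j‖ ^ 2 := by
    have : |v i| ^ 2 = ‖v i‖ ^ 2 := by rw [Real.norm_eq_abs]
    rw [this]
    exact Finset.single_le_sum (f := fun j => ‖v j‖ ^ 2) (fun j _ => sq_nonneg _)
      (Finset.mem_univ i)
  have := Real.sqrt_le_sqrt h1
  rwa [Real.sqrt_sq (abs_nonneg _)] at this

lemma x'_meas {d : ℕ} {x' : ℝ → EuclideanSpace ℝ (Fin d)} (h : Measurable x') (i : Fin d) :
    Measurable fun r => x' r i := (EuclideanSpace.proj (𝕜 := ℝ) i).continuous.measurable.comp h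

set_option maxHeartbeats 1000000 in

lemma ftc_chain {E : Type*} [NormedAddCommGroup E] [NormedSpace ℝ E] [FiniteDimensional ℝ E]
    (g : E → ℝ) (hg : ContDiff ℝ 1 g) (φ z : ℝ → E) (s t : ℝ) (hst : s ≤ t)
    (hφm : AEStronglyMeasurable φ (volume.restrict (Set.Ioc s t)))
    (M : ℝ) (hφb : ∀ u, ‖φ u‖ ≤ M)
    (hz : ∀ u ∈ Set.Icc s t, z u = z s + ∫ r in s..u, φ r) :
    g (z t) = g (z s) + ∫ u in s..t, fderiv ℝ g (z u) (φ u) := by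
  have hM : 0 ≤ M := le_trans (norm_nonneg _) (hφb s)
  -- integrability of φ on subintervals
  have hφint : ∀ a b, s ≤ a → a ≤ b → b ≤ t → IntervalIntegrable φ volume a b := by
    intro a b ha hab hbt
    exact II_of_bdd hab (hφm.mono_measure
      (Measure.restrict_mono (Set.Ioc_subset_Ioc ha hbt) le_rfl)) M (fun u _ => hφb u)
  -- increments of z
  have hzinc : ∀ a b, s ≤ a → a ≤ b → b ≤ t → z b - z a = ∫ r in a..b, φ r := by
    intro a b ha hab hbt
    rw [hz a ⟨ha, hab.trans hbt⟩, hz b ⟨ha.trans hab, hbt⟩, add_sub_add_left_eq_sub]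
    exact integral_interval_sub_left (hφint s b le_rfl (ha.trans hab) hbt)
      (hφint s a le_rfl ha (hab.trans hbt))
  have hznorm : ∀ a b, s ≤ a → a ≤ b → b ≤ t → ‖z b - z a‖ ≤ M * (b - a) := by
    intro a b ha hab hbt
    rw [hzinc a b ha hab hbt]
    have := intervalIntegral.norm_integral_le_of_norm_le_const
      (C := M) (f := φ) (a := a) (b := b) (fun x _ => hφb x)
    rwa [abs_of_nonneg (by linarith)] at this
  have hzcont : ContinuousOn z (Set.Icc s t) := by
    have h1 : ContinuousOn (fun u => z s + ∫ r in s..u, φ r) (Set.Icc s t) := by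
      apply continuousOn_const.add
      have := intervalIntegral.continuousOn_primitive_interval'
        (hφint s t le_rfl hst le_rfl) (left_mem_uIcc (a := s) (b := t))
      rwa [Set.uIcc_of_le hst] at this
    exact h1.congr hz
  have hDg_cont : Continuous (fderiv ℝ g) := hg.continuous_fderiv one_ne_zero
  set q : ℝ → ℝ := fun u => fderiv ℝ g (z u) (φ u) with hq
  -- operator norm bound on the image
  obtain ⟨CD, hCD'⟩ := (isCompact_Icc.image_of_continuousOn hzcont).exists_bound_of_continuousOn
    (hDg_cont.continuousOn (s := z '' Set.Icc s t))
  have hCD : ∀ u ∈ Set.Icc s t, ‖fderiv ℝ g (z u)‖ ≤ CD := fun u hu =>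
    hCD' _ (Set.mem_image_of_mem z hu)
  have hq_aesm : AEStronglyMeasurable q (volume.restrict (Set.Ioc s t)) := by
    have h1 : AEStronglyMeasurable (fun u => fderiv ℝ g (z u))
        (volume.restrict (Set.Ioc s t)) :=
      ((hDg_cont.comp_continuousOn hzcont).mono Set.Ioc_subset_Icc_self).aestronglyMeasurable
        measurableSet_Ioc
    exact isBoundedBilinearMap_apply.continuous.comp_aestronglyMeasurable (h1.prodMk hφm)
  have hqint : ∀ a b, s ≤ a → a ≤ b → b ≤ t → IntervalIntegrable q volume a b := by
    intro a b ha hab hbt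
    refine II_of_bdd hab (hq_aesm.mono_measure
      (Measure.restrict_mono (Set.Ioc_subset_Ioc ha hbt) le_rfl)) (CD * M) ?_
    intro u hu
    have hu' : u ∈ Set.Icc s t := Set.Ioc_subset_Icc_self (Set.Ioc_subset_Ioc ha hbt hu)
    calc ‖q u‖ ≤ ‖fderiv ℝ g (z u)‖ * ‖φ u‖ := (fderiv ℝ g (z u)).le_opNorm (φ u)
      _ ≤ CD * M := mul_le_mul (hCD u hu') (hφb u) (norm_nonneg _)
          ((norm_nonneg _).trans (hCD u hu'))
  -- the main estimate
  have key : ∀ ε > 0, ‖g (z t) - g (z s) - ∫ u in s..t, q u‖ ≤ ε := by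
    intro ε hε
    set ε' := ε / (M * (t - s) + 1) with hε'def
    have hMts : 0 ≤ M * (t - s) := mul_nonneg hM (by linarith)
    have hε' : 0 < ε' := by positivity
    set C : Set E := Metric.closedBall (z s) (2 * (M * (t - s)) + 1) with hCdef
    have hCcompact : IsCompact C := isCompact_closedBall _ _
    have huc := hCcompact.uniformContinuousOn_of_continuous hDg_cont.continuousOn
    rw [Metric.uniformContinuousOn_iff] at huc
    obtain ⟨δ, hδpos, hδ⟩ := huc ε' hε'
    obtain ⟨n, hn⟩ := exists_nat_gt (max 1 (2 * M * (t - s) / δ))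
    have hn1 : (1 : ℝ) ≤ n := le_of_lt (lt_of_le_of_lt (le_max_left _ _) hn)
    have hnpos : 0 < (n : ℝ) := by linarith
    set h := (t - s) / n with hhdef
    have hh0 : 0 ≤ h := div_nonneg (by linarith) hnpos.le
    have h2Mh : 2 * M * h < δ := by
      have h1 : 2 * M * (t - s) / δ < n := lt_of_le_of_lt (le_max_right _ _) hn
      rw [div_lt_iff₀ hδpos] at h1
      rw [hhdef, show 2 * M * ((t - s) / n) = 2 * M * (t - s) / n from by ring,
        div_lt_iff₀ hnpos]
      linarith
    have hhts : h ≤ t - s := by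
      rw [hhdef]
      exact div_le_self (by linarith) hn1
    set u : ℕ → ℝ := fun j => s + j * h with hudef
    have hu0 : u 0 = s := by simp [hudef]
    have hun : u n = t := by
      rw [hudef]; simp only; rw [hhdef]; field_simp; ring
    have humem : ∀ j, j ≤ n → u j ∈ Set.Icc s t := by
      intro j hj
      constructor
      · rw [hudef]; simp only
        nlinarith [Nat.cast_nonneg (α := ℝ) j]
      · rw [← hun, hudef]; simp only
        have : (j : ℝ) ≤ n := Nat.cast_le.2 hj
        nlinarith
    have humono : ∀ j : ℕ, u j ≤ u (j + 1) := by
      intro j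
      rw [hudef]; simp only
      push_cast
      nlinarith
    have hstep : ∀ j : ℕ, u (j + 1) - u j = h := by
      intro j; rw [hudef]; simp only; push_cast; ring
    -- telescoping
    have hTel : g (z t) - g (z s) =
        ∑ j ∈ Finset.range n, (g (z (u (j + 1))) - g (z (u j))) := by
      rw [Finset.sum_range_sub (fun j => g (z (u j))), hu0, hun]
    have hInt : ∫ x in s..t, q x = ∑ j ∈ Finset.range n, ∫ x in (u j)..(u (j + 1)), q x := by
      rw [← hu0, ← hun]
      exact (intervalIntegral.sum_integral_adjacent_intervals fun k hk =>
        hqint _ _ (humem k (le_of_lt hk)).1 (humono k) (humem (k + 1) hk).2).symm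
    -- per interval bound
    have key : ∀ j, j < n →
        ‖(g (z (u (j + 1))) - g (z (u j))) - ∫ x in (u j)..(u (j + 1)), q x‖
          ≤ ε' * (M * h) := by
      intro j hj
      set a := u j with hadef
      set b := u (j + 1) with hbdef
      have hab : a ≤ b := humono j
      have hamem : a ∈ Set.Icc s t := humem j hj.le
      have hbmem : b ∈ Set.Icc s t := humem (j + 1) hj
      have hba : b - a = h := hstep j
      set v := z b - z a with hvdef
      have hv : v = ∫ r in a..b, φ r := hzinc a b hamem.1 hab hbmem.2
      have hvn : ‖v‖ ≤ M * h := by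
        rw [← hba]; exact hznorm a b hamem.1 hab hbmem.2
      set ξ : ℝ → E := fun θ => z a + θ • v with hξdef
      have hzC : ∀ x, x ∈ Set.Icc s t → z x ∈ C := by
        intro x hx
        rw [hCdef, Metric.mem_closedBall, dist_eq_norm]
        have := hznorm s x le_rfl hx.1 hx.2
        have h2 : M * (x - s) ≤ M * (t - s) := by nlinarith [hx.2]
        calc ‖z x - z s‖ ≤ M * (x - s) := this
          _ ≤ 2 * (M * (t - s)) + 1 := by linarith
      have hξC : ∀ θ, θ ∈ Set.Icc (0:ℝ) 1 → ξ θ ∈ C := by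
        intro θ hθ
        rw [hCdef, Metric.mem_closedBall, dist_eq_norm, hξdef]
        have h1 : ‖z a + θ • v - z s‖ ≤ ‖z a - z s‖ + ‖θ • v‖ := by
          rw [show z a + θ • v - z s = (z a - z s) + θ • v from by abel]
          exact norm_add_le _ _
        have h2 : ‖θ • v‖ ≤ M * h := by
          rw [norm_smul, Real.norm_eq_abs, abs_of_nonneg hθ.1]
          nlinarith [norm_nonneg v, hθ.2]
        have h3 : ‖z a - z s‖ ≤ M * (t - s) := by
          have := hznorm s a le_rfl hamem.1 hamem.2
          nlinarith [hamem.2]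
        have h4 : M * h ≤ M * (t - s) := by nlinarith
        calc ‖z a + θ • v - z s‖ ≤ ‖z a - z s‖ + ‖θ • v‖ := h1
          _ ≤ 2 * (M * (t - s)) + 1 := by linarith
      have hξcont : Continuous ξ := by
        rw [hξdef]; exact continuous_const.add (continuous_id.smul continuous_const)
      have hDeriv : ∀ θ : ℝ, HasDerivAt (fun θ => g (ξ θ)) ((fderiv ℝ g (ξ θ)) v) θ := by
        intro θ
        have h1 : HasDerivAt ξ v θ := by
          rw [hξdef]
          simpa using ((hasDerivAt_id θ).smul_const v).const_add (z a)
        exact ((hg.differentiable one_ne_zero) (ξ θ)).hasFDerivAt.comp_hasDerivAt θ h1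
      have hcontθ : Continuous fun θ => (fderiv ℝ g (ξ θ)) v :=
        isBoundedBilinearMap_apply.continuous.comp
          ((hDg_cont.comp hξcont).prodMk continuous_const)
      have hseg : g (z b) - g (z a) = ∫ θ in (0:ℝ)..1, (fderiv ℝ g (ξ θ)) v := by
        rw [intervalIntegral.integral_eq_sub_of_hasDerivAt (fun θ _ => hDeriv θ)
          (hcontθ.intervalIntegrable 0 1)]
        congr 1 <;> rw [hξdef] <;> simp [hvdef]
      have hswap : ∀ θ : ℝ, (fderiv ℝ g (ξ θ)) v = ∫ x in a..b, (fderiv ℝ g (ξ θ)) (φ x) := by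
        intro θ
        rw [hv, (fderiv ℝ g (ξ θ)).intervalIntegral_comp_comm
          (hφint a b hamem.1 hab hbmem.2)]
      have hGint : ∀ θ : ℝ, IntervalIntegrable (fun x => (fderiv ℝ g (ξ θ)) (φ x))
          volume a b := by
        intro θ
        refine II_of_bdd hab (((fderiv ℝ g (ξ θ)).continuous.comp_aestronglyMeasurable
          (hφm.mono_measure (Measure.restrict_mono
            (Set.Ioc_subset_Ioc hamem.1 hbmem.2) le_rfl)))) (‖fderiv ℝ g (ξ θ)‖ * M) ?_
        intro x _
        exact le_trans ((fderiv ℝ g (ξ θ)).le_opNorm (φ x))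
          (mul_le_mul_of_nonneg_left (hφb x) (norm_nonneg _))
      have hsplit : (g (z b) - g (z a)) - ∫ x in a..b, q x
          = ∫ θ in (0:ℝ)..1, ((fderiv ℝ g (ξ θ)) v - ∫ x in a..b, q x) := by
        rw [intervalIntegral.integral_sub (hcontθ.intervalIntegrable 0 1)
          intervalIntegrable_const, intervalIntegral.integral_const, ← hseg]
        simp
      rw [hsplit]
      have hbnd : ∀ θ ∈ Set.uIoc (0:ℝ) 1,
          ‖(fderiv ℝ g (ξ θ)) v - ∫ x in a..b, q x‖ ≤ ε' * (M * h) := by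
        intro θ hθ
        rw [Set.uIoc_of_le (by norm_num : (0:ℝ) ≤ 1)] at hθ
        have hθ' : θ ∈ Set.Icc (0:ℝ) 1 := ⟨hθ.1.le, hθ.2⟩
        rw [hswap θ, ← intervalIntegral.integral_sub (hGint θ)
          (hqint a b hamem.1 hab hbmem.2)]
        have hptw : ∀ x ∈ Set.uIoc a b,
            ‖(fderiv ℝ g (ξ θ)) (φ x) - q x‖ ≤ ε' * M := by
          intro x hx
          rw [Set.uIoc_of_le hab] at hx
          have hx' : x ∈ Set.Icc s t :=
            ⟨hamem.1.trans hx.1.le, hx.2.trans hbmem.2⟩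
          have hdist : dist (ξ θ) (z x) < δ := by
            rw [dist_eq_norm, hξdef]
            have e1 : z a + θ • v - z x = θ • v - (z x - z a) := by abel
            rw [e1]
            have h2 : ‖θ • v‖ ≤ M * h := by
              rw [norm_smul, Real.norm_eq_abs, abs_of_nonneg hθ'.1]
              nlinarith [norm_nonneg v, hθ'.2]
            have h3 : ‖z x - z a‖ ≤ M * h := by
              have := hznorm a x hamem.1 hx.1.le (hx.2.trans hbmem.2)
              have hxa : x - a ≤ h := by rw [← hba]; linarith [hx.2]
              nlinarith [hx.1.le]
            calc ‖θ • v - (z x - z a)‖ ≤ ‖θ • v‖ + ‖z x - z a‖ := norm_sub_le _ _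
              _ ≤ 2 * M * h := by linarith
              _ < δ := h2Mh
          have hd := hδ (ξ θ) (hξC θ hθ') (z x) (hzC x hx') hdist
          rw [dist_eq_norm] at hd
          have e2 : (fderiv ℝ g (ξ θ)) (φ x) - q x
              = (fderiv ℝ g (ξ θ) - fderiv ℝ g (z x)) (φ x) := by
            rw [hq]; simp [ContinuousLinearMap.sub_apply]
          rw [e2]
          calc ‖(fderiv ℝ g (ξ θ) - fderiv ℝ g (z x)) (φ x)‖
              ≤ ‖fderiv ℝ g (ξ θ) - fderiv ℝ g (z x)‖ * ‖φ x‖ :=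
                ContinuousLinearMap.le_opNorm _ _
            _ ≤ ε' * M := mul_le_mul hd.le (hφb x) (norm_nonneg _) hε'.le
        have := intervalIntegral.norm_integral_le_of_norm_le_const hptw
        rw [abs_of_nonneg (by linarith : (0:ℝ) ≤ b - a)] at this
        calc ‖∫ x in a..b, ((fderiv ℝ g (ξ θ)) (φ x) - q x)‖ ≤ ε' * M * (b - a) := this
          _ = ε' * (M * h) := by rw [hba]; ring
      have := intervalIntegral.norm_integral_le_of_norm_le_const hbnd
      simpa using this
    calc ‖g (z t) - g (z s) - ∫ x in s..t, q x‖
        = ‖∑ j ∈ Finset.range n, ((g (z (u (j + 1))) - g (z (u j)))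
            - ∫ x in (u j)..(u (j + 1)), q x)‖ := by
          rw [Finset.sum_sub_distrib, ← hTel, ← hInt]
      _ ≤ ∑ j ∈ Finset.range n, ‖(g (z (u (j + 1))) - g (z (u j)))
            - ∫ x in (u j)..(u (j + 1)), q x‖ := norm_sum_le _ _
      _ ≤ ∑ _j ∈ Finset.range n, ε' * (M * h) :=
          Finset.sum_le_sum fun j hj => key j (Finset.mem_range.1 hj)
      _ = n * (ε' * (M * h)) := by rw [Finset.sum_const, Finset.card_range]; ring
      _ = ε' * (M * (t - s)) := by rw [hhdef]; field_simp
      _ ≤ ε := by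
          rw [hε'def, div_mul_eq_mul_div, div_le_iff₀ (by linarith)]
          nlinarith
  have h0 : ‖g (z t) - g (z s) - ∫ x in s..t, q x‖ ≤ 0 := by
    by_contra hc
    push_neg at hc
    have := key (‖g (z t) - g (z s) - ∫ x in s..t, q x‖ / 2) (by linarith)
    linarith
  have : g (z t) - g (z s) - ∫ x in s..t, q x = 0 := by
    have := norm_le_zero_iff.1 h0
    exact this
  linarith [this]

lemma fubini_tri_core {s t : ℝ} (hst : s ≤ t) (F G : ℝ → ℝ)
    (hFm : Measurable F) (hGm : Measurable G) (CF CG : ℝ)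
    (hF : ∀ r, |F r| ≤ CF) (hG : ∀ u, |G u| ≤ CG) :
    (∫ r in s..t, F r * ∫ u in s..r, G u) = ∫ u in s..t, G u * ∫ r in u..t, F r := by
  set μ := volume.restrict (Set.Ioo s t) with hμ
  haveI : IsFiniteMeasure μ := by
    constructor
    rw [hμ, Measure.restrict_apply_univ]
    exact measure_Ioo_lt_top
  set S : Set (ℝ × ℝ) := {p : ℝ × ℝ | s < p.2 ∧ p.2 < p.1} with hS
  have hSm : MeasurableSet S := by
    apply MeasurableSet.inter
    · exact measurableSet_lt measurable_const measurable_snd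
    · exact measurableSet_lt measurable_snd measurable_fst
  set k : ℝ × ℝ → ℝ := fun p => F p.1 * (Set.Ioo s p.1).indicator G p.2 with hk
  have hkeq : ∀ p : ℝ × ℝ, k p = S.indicator (fun p => F p.1 * G p.2) p := by
    intro p
    rw [hk, hS]
    simp only [Set.indicator_apply, Set.mem_Ioo, Set.mem_setOf_eq]
    split_ifs with h
    · rfl
    · exact mul_zero _
  have hkm : Measurable k := by
    have : Measurable (S.indicator fun p : ℝ × ℝ => F p.1 * G p.2) :=
      ((hFm.comp measurable_fst).mul (hGm.comp measurable_snd)).indicator hSm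
    exact (funext hkeq : k = _) ▸ this
  have hkb : ∀ p, ‖k p‖ ≤ CF * CG := by
    intro p
    rw [hkeq p, Real.norm_eq_abs]
    rcases Set.indicator_eq_zero_or_self _ (fun p : ℝ × ℝ => F p.1 * G p.2) p with h | h
    · rw [h, abs_zero]
      exact mul_nonneg ((abs_nonneg _).trans (hF 0)) ((abs_nonneg _).trans (hG 0))
    · rw [h, abs_mul]
      exact mul_le_mul (hF _) (hG _) (abs_nonneg _) ((abs_nonneg _).trans (hF 0))
  have hkint : Integrable k (μ.prod μ) := by
    refine Integrable.mono' (integrable_const (CF * CG)) hkm.aestronglyMeasurable ?_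
    exact Filter.Eventually.of_forall hkb
  -- LHS as double integral
  have hL : (∫ r in s..t, F r * ∫ u in s..r, G u) = ∫ r, (∫ u, k (r, u) ∂μ) ∂μ := by
    rw [intervalIntegral.integral_of_le hst, integral_Ioc_eq_integral_Ioo]
    refine setIntegral_congr_fun measurableSet_Ioo ?_
    intro r hr
    show F r * (∫ u in s..r, G u) = ∫ u, k (r, u) ∂μ
    have h1 : ∫ u in s..r, G u = ∫ u, (Set.Ioo s r).indicator G u ∂μ := by
      rw [intervalIntegral.integral_of_le hr.1.le, integral_Ioc_eq_integral_Ioo, hμ,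
        setIntegral_indicator measurableSet_Ioo,
        Set.inter_eq_self_of_subset_right (Set.Ioo_subset_Ioo_right hr.2.le)]
    rw [h1, ← MeasureTheory.integral_const_mul]
  -- RHS as double integral
  have hR : (∫ u in s..t, G u * ∫ r in u..t, F r) = ∫ u, (∫ r, k (r, u) ∂μ) ∂μ := by
    rw [intervalIntegral.integral_of_le hst, integral_Ioc_eq_integral_Ioo]
    refine setIntegral_congr_fun measurableSet_Ioo ?_
    intro u hu
    show G u * (∫ r in u..t, F r) = ∫ r, k (r, u) ∂μ
    have h2 : ∀ r, k (r, u) = (Set.Ioi u).indicator (fun r => F r * G u) r := by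
      intro r
      rw [hk]
      simp only [Set.indicator_apply, Set.mem_Ioo, Set.mem_Ioi]
      by_cases h : u < r
      · rw [if_pos ⟨hu.1, h⟩, if_pos h]
      · rw [if_neg (fun hc => h hc.2), if_neg h, mul_zero]
    have h3 : ∫ r, k (r, u) ∂μ = (∫ r in Set.Ioo u t, F r) * G u := by
      simp_rw [h2]
      rw [hμ, setIntegral_indicator measurableSet_Ioi]
      have h4 : Set.Ioo s t ∩ Set.Ioi u = Set.Ioo u t := by
        ext r
        simp only [Set.mem_inter_iff, Set.mem_Ioo, Set.mem_Ioi]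
        exact ⟨fun ⟨⟨_, h2'⟩, h3'⟩ => ⟨h3', h2'⟩, fun ⟨h1', h2'⟩ => ⟨⟨hu.1.trans h1', h2'⟩, h1'⟩⟩
      rw [h4, MeasureTheory.integral_mul_const]
    rw [h3, intervalIntegral.integral_of_le hu.2.le, integral_Ioc_eq_integral_Ioo, mul_comm]
  rw [hL, hR]
  exact integral_integral_swap hkint

lemma clamp_abs_le {c x : ℝ} (hc : 0 ≤ c) : |max (-c) (min c x)| ≤ c := by
  rw [abs_le]
  constructor
  · exact le_max_left _ _
  · exact max_le (by linarith) (min_le_left _ _)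

lemma clamp_eq_self {c x : ℝ} (hx : |x| ≤ c) : max (-c) (min c x) = x := by
  rw [abs_le] at hx
  rw [min_eq_right hx.2, max_eq_right hx.1]

lemma fubini_tri {s t : ℝ} (hst : s ≤ t) (F G : ℝ → ℝ)
    (hFm : Measurable F)
    (hGm : AEStronglyMeasurable G (volume.restrict (Set.Ioc s t)))
    (CF CG : ℝ)
    (hF : ∀ r ∈ Set.Ioc s t, |F r| ≤ CF) (hG : ∀ u ∈ Set.Ioc s t, |G u| ≤ CG) :
    (∫ r in s..t, F r * ∫ u in s..r, G u) = ∫ u in s..t, G u * ∫ r in u..t, F r := by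
  rcases eq_or_lt_of_le hst with rfl | hlt
  · simp
  have hCF : 0 ≤ CF := (abs_nonneg _).trans (hF t ⟨hlt, le_rfl⟩)
  have hCG : 0 ≤ CG := (abs_nonneg _).trans (hG t ⟨hlt, le_rfl⟩)
  set F1 : ℝ → ℝ := fun r => max (-CF) (min CF (F r)) with hF1
  set G0 : ℝ → ℝ := hGm.mk G with hG0
  set G1 : ℝ → ℝ := fun u => max (-CG) (min CG (G0 u)) with hG1
  have hF1m : Measurable F1 := measurable_const.max (measurable_const.min hFm)
  have hG1m : Measurable G1 :=
    measurable_const.max (measurable_const.min hGm.stronglyMeasurable_mk.measurable)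
  have hF1b : ∀ r, |F1 r| ≤ CF := fun r => clamp_abs_le hCF
  have hG1b : ∀ u, |G1 u| ≤ CG := fun u => clamp_abs_le hCG
  have hF1eq : ∀ r ∈ Set.Ioc s t, F1 r = F r := fun r hr => clamp_eq_self (hF r hr)
  have hG1ae : ∀ᵐ u ∂(volume.restrict (Set.Ioc s t)), G1 u = G u := by
    filter_upwards [hGm.ae_eq_mk, ae_restrict_mem measurableSet_Ioc] with u hu hmem
    rw [hG1]
    simp only
    rw [hG0, ← hu]
    exact clamp_eq_self (hG u hmem)
  have core := fubini_tri_core hst F1 G1 hF1m hG1m CF CG hF1b hG1b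
  -- transfer inner integrals
  have hinner1 : ∀ r ∈ Set.Ioc s t, (∫ u in s..r, G1 u) = ∫ u in s..r, G u := by
    intro r hr
    apply intervalIntegral.integral_congr_ae
    rw [Set.uIoc_of_le hr.1.le]
    have h1 : ∀ᵐ u ∂(volume.restrict (Set.Ioc s r)), G1 u = G u :=
      ae_restrict_of_ae_restrict_of_subset (Set.Ioc_subset_Ioc le_rfl hr.2) hG1ae
    exact ae_imp_of_ae_restrict h1
  have hinner2 : ∀ u ∈ Set.Ioc s t, (∫ r in u..t, F1 r) = ∫ r in u..t, F r := by
    intro u hu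
    apply intervalIntegral.integral_congr_ae
    rw [Set.uIoc_of_le hu.2]
    refine Filter.Eventually.of_forall ?_
    intro r hr
    exact hF1eq r ⟨hu.1.trans hr.1, hr.2⟩
  calc (∫ r in s..t, F r * ∫ u in s..r, G u)
      = ∫ r in s..t, F1 r * ∫ u in s..r, G1 u := by
        apply intervalIntegral.integral_congr_ae
        rw [Set.uIoc_of_le hst]
        refine Filter.Eventually.of_forall ?_
        intro r hr
        rw [hF1eq r hr, hinner1 r hr]
    _ = ∫ u in s..t, G1 u * ∫ r in u..t, F1 r := core
    _ = ∫ u in s..t, G u * ∫ r in u..t, F r := by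
        apply intervalIntegral.integral_congr_ae
        rw [Set.uIoc_of_le hst]
        have h2 := ae_imp_of_ae_restrict hG1ae
        filter_upwards [h2] with u hu hmem
        rw [hu hmem, hinner2 u hmem]

lemma vfOp_contDiff {e d N : ℕ}
    {V : Fin d → EuclideanSpace ℝ (Fin e) → EuclideanSpace ℝ (Fin e)}
    (hV : ∀ i, ContDiff ℝ (N : ℕ∞) (V i))
    {f : EuclideanSpace ℝ (Fin e) → ℝ} (hf : ContDiff ℝ (⊤ : ℕ∞) f) :
    ∀ w : List (Fin d), w.length ≤ N →
      ContDiff ℝ ((N + 1 - w.length : ℕ) : ℕ∞) (vfOp V w f) := by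
  intro w
  induction w with
  | nil =>
    intro _
    simp only [vfOp, List.length_nil, Nat.sub_zero]
    exact hf.of_le (by exact_mod_cast le_top)
  | cons i w ih =>
    intro hlen
    simp only [List.length_cons] at hlen ⊢
    have hw : w.length ≤ N := by omega
    have h1 : ContDiff ℝ ((N - w.length : ℕ) : ℕ∞) (fderiv ℝ (vfOp V w f)) := by
      refine (ih hw).fderiv_right ?_
      rw [show N + 1 - w.length = (N - w.length) + 1 from by omega]
      push_cast
      exact le_rfl
    have h2 : ContDiff ℝ ((N - w.length : ℕ) : ℕ∞) (V i) :=
      (hV i).of_le (by exact_mod_cast Nat.sub_le N _)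
    have h3 : ContDiff ℝ ((N - w.length : ℕ) : ℕ∞)
        (fun y => fderiv ℝ (vfOp V w f) y (V i y)) := h1.clm_apply h2
    have : N + 1 - (w.length + 1) = N - w.length := by omega
    rw [this]
    exact h3

lemma vfOp_contDiff_one {e d N : ℕ}
    {V : Fin d → EuclideanSpace ℝ (Fin e) → EuclideanSpace ℝ (Fin e)}
    (hV : ∀ i, ContDiff ℝ (N : ℕ∞) (V i))
    {f : EuclideanSpace ℝ (Fin e) → ℝ} (hf : ContDiff ℝ (⊤ : ℕ∞) f)
    (w : List (Fin d)) (hw : w.length ≤ N) : ContDiff ℝ 1 (vfOp V w f) := by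
  refine (vfOp_contDiff hV hf w hw).of_le ?_
  have : 1 ≤ N + 1 - w.length := by omega
  exact_mod_cast this

lemma iterInt_cont {d : ℕ} {x' : ℝ → EuclideanSpace ℝ (Fin d)}
    (hx'm : Measurable x') {L : ℝ} (hL : ∀ r, ‖x' r‖ ≤ L) :
    ∀ (w : List (Fin d)) (t : ℝ), Continuous fun r => iterInt x' w r t := by
  intro w
  induction w with
  | nil => intro t; simpa [iterInt] using continuous_const
  | cons i w ih =>
    intro t
    have hint : ∀ a b : ℝ, IntervalIntegrable (fun r => x' r i * iterInt x' w r t)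
        volume a b := by
      have main : ∀ a b : ℝ, a ≤ b →
          IntervalIntegrable (fun r => x' r i * iterInt x' w r t) volume a b := by
        intro a b hab
        obtain ⟨c, hc⟩ := isCompact_Icc.exists_bound_of_continuousOn
          ((ih t).continuousOn (s := Set.Icc a b))
        have hc0 : 0 ≤ c := (norm_nonneg _).trans (hc a ⟨le_rfl, hab⟩)
        refine II_of_bdd hab (((x'_meas hx'm i).mul (ih t).measurable).aestronglyMeasurable) 
          (max L 0 * c) ?_
        intro u hu
        rw [Real.norm_eq_abs, abs_mul]
        refine mul_le_mul ?_ ?_ (abs_nonneg _) (le_max_right _ _)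
        · exact (coord_abs_le_norm _ i).trans ((hL u).trans (le_max_left _ _))
        · have := hc u (Set.Ioc_subset_Icc_self hu)
          rwa [Real.norm_eq_abs] at this
      intro a b
      rcases le_total a b with hab | hba
      · exact main a b hab
      · exact (main b a hba).symm
    have hcont : Continuous fun r => ∫ x in t..r, x' x i * iterInt x' w x t :=
      intervalIntegral.continuous_primitive hint t
    have heq : (fun r => iterInt x' (i :: w) r t)
        = fun r => -∫ x in t..r, x' x i * iterInt x' w x t := by
      funext r
      show (∫ x in r..t, x' x i * iterInt x' w x t) = _
      rw [← intervalIntegral.integral_symm]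
    rw [heq]
    exact hcont.neg

end Aux

set_option maxHeartbeats 2000000 in
lemma taylor_aux {d e N : ℕ}
    (V : Fin d → EuclideanSpace ℝ (Fin e) → EuclideanSpace ℝ (Fin e))
    (hV : ∀ i, ContDiff ℝ (N : ℕ∞) (V i))
    (B : ℝ) (hVb : ∀ i z, ‖V i z‖ ≤ B)
    (x' : ℝ → EuclideanSpace ℝ (Fin d)) (hx'm : Measurable x')
    (L : ℝ) (hL : ∀ r, ‖x' r‖ ≤ L)
    (y : ℝ → EuclideanSpace ℝ (Fin e)) (hycont : ContinuousOn y (Set.Icc 0 1))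
    (hyint : ∀ u ∈ Set.Icc (0:ℝ) 1, y u = y 0 + ∫ r in (0:ℝ)..u, ∑ i, x' r i • V i (y r))
    (f : EuclideanSpace ℝ (Fin e) → ℝ) (hf : ContDiff ℝ (⊤ : ℕ∞) f)
    (s t : ℝ) (hs : 0 ≤ s) (hst : s ≤ t) (ht : t ≤ 1) :
    ∀ m : ℕ, m + 1 ≤ N →
      f (y t) = f (y s)
        + (∑ k ∈ Finset.Icc 1 m, ∑ w : Fin k → Fin d,
            vfOp V (List.ofFn w) f (y s) * iterInt x' (List.ofFn w) s t)
        + ∑ w : Fin (m + 1) → Fin d,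
            remInt x' (fun r => vfOp V (List.ofFn w) f (y r)) (List.ofFn w) s t := by
  have hL0 : 0 ≤ L := (norm_nonneg _).trans (hL 0)
  set φ : ℝ → EuclideanSpace ℝ (Fin e) := fun u => ∑ i, x' u i • V i (y u) with hφdef
  have hφm : AEStronglyMeasurable φ (volume.restrict (Set.Ioc 0 1)) := by
    apply Finset.aestronglyMeasurable_fun_sum
    intro i _
    exact ((x'_meas hx'm i).aestronglyMeasurable).smul
      ((((hV i).continuous.comp_continuousOn hycont).mono
        Set.Ioc_subset_Icc_self).aestronglyMeasurable measurableSet_Ioc)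
  set M : ℝ := (d : ℝ) * (L * max B 0) with hMdef
  have hφb : ∀ u, ‖φ u‖ ≤ M := by
    intro u
    calc ‖φ u‖ ≤ ∑ i : Fin d, ‖x' u i • V i (y u)‖ := norm_sum_le _ _
      _ ≤ ∑ _i : Fin d, L * max B 0 := by
          refine Finset.sum_le_sum fun i _ => ?_
          rw [norm_smul, Real.norm_eq_abs]
          exact mul_le_mul ((coord_abs_le_norm _ i).trans (hL u))
            ((hVb i _).trans (le_max_left _ _)) (norm_nonneg _) hL0
      _ = M := by
          rw [Finset.sum_const, Finset.card_univ, Fintype.card_fin, hMdef, nsmul_eq_mul]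
  have hφint : ∀ a b : ℝ, 0 ≤ a → a ≤ b → b ≤ 1 → IntervalIntegrable φ volume a b :=
    fun a b ha hab hb => II_of_bdd hab (hφm.mono_measure
      (Measure.restrict_mono (Set.Ioc_subset_Ioc ha hb) le_rfl)) M fun u _ => hφb u
  have hyz : ∀ a, 0 ≤ a → a ≤ 1 → ∀ u ∈ Set.Icc a 1, y u = y a + ∫ r in a..u, φ r := by
    intro a ha ha1 u hu
    rw [hyint u ⟨ha.trans hu.1, hu.2⟩, hyint a ⟨ha, ha1⟩, add_assoc]
    congr 1
    exact (intervalIntegral.integral_add_adjacent_intervals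
      (hφint 0 a le_rfl ha ha1) (hφint a u ha hu.1 hu.2)).symm
  have II_mulx : ∀ (i : Fin d) (ψ : ℝ → ℝ) (a b : ℝ), a ≤ b →
      ContinuousOn ψ (Set.Icc a b) →
      IntervalIntegrable (fun u => x' u i * ψ u) volume a b := by
    intro i ψ a b hab hψ
    obtain ⟨c, hc⟩ := isCompact_Icc.exists_bound_of_continuousOn hψ
    refine II_of_bdd hab (((x'_meas hx'm i).aestronglyMeasurable).mul
      ((hψ.mono Set.Ioc_subset_Icc_self).aestronglyMeasurable measurableSet_Ioc)) (L * c) ?_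
    intro u hu
    rw [Real.norm_eq_abs, abs_mul]
    have hcu := hc u (Set.Ioc_subset_Icc_self hu)
    rw [Real.norm_eq_abs] at hcu
    exact mul_le_mul ((coord_abs_le_norm _ i).trans (hL u)) hcu (abs_nonneg _) hL0
  have ftcV : ∀ g : EuclideanSpace ℝ (Fin e) → ℝ, ContDiff ℝ 1 g →
      ∀ a b : ℝ, 0 ≤ a → a ≤ b → b ≤ 1 →
      g (y b) = g (y a) + ∑ i, ∫ u in a..b, x' u i * (fderiv ℝ g (y u)) (V i (y u)) := by
    intro g hg a b ha hab hb
    have h0 := ftc_chain g hg φ y a b hab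
      (hφm.mono_measure (Measure.restrict_mono (Set.Ioc_subset_Ioc ha hb) le_rfl)) M hφb
      (fun u hu => hyz a ha (hab.trans hb) u ⟨hu.1, hu.2.trans hb⟩)
    rw [h0]
    congr 1
    have hptw : ∀ u, (fderiv ℝ g (y u)) (φ u)
        = ∑ i, x' u i * (fderiv ℝ g (y u)) (V i (y u)) := by
      intro u
      rw [hφdef]
      simp only
      rw [map_sum]
      exact Finset.sum_congr rfl fun i _ => by
        rw [ContinuousLinearMap.map_smul, smul_eq_mul]
    simp_rw [hptw]
    rw [intervalIntegral.integral_finset_sum]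
    intro i _
    refine II_mulx i _ a b hab ?_
    have h1 : ContinuousOn (fun u => fderiv ℝ g (y u)) (Set.Icc 0 1) :=
      (hg.continuous_fderiv one_ne_zero).comp_continuousOn hycont
    have h2 : ContinuousOn (fun u => V i (y u)) (Set.Icc 0 1) :=
      (hV i).continuous.comp_continuousOn hycont
    exact (h1.clm_apply h2).mono (Set.Icc_subset_Icc ha hb)
  have vfC : ∀ w : List (Fin d), w.length ≤ N →
      ContinuousOn (fun u => vfOp V w f (y u)) (Set.Icc 0 1) :=
    fun w hw => (vfOp_contDiff_one hV hf w hw).continuous.comp_continuousOn hycont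
  have iterC : ∀ (w : List (Fin d)) (t' : ℝ), Continuous fun r => iterInt x' w r t' :=
    iterInt_cont hx'm hL
  -- expansion of a remainder term
  have rem_exp : ∀ v : List (Fin d), v ≠ [] → v.length + 1 ≤ N →
      remInt x' (fun r => vfOp V v f (y r)) v s t
        = vfOp V v f (y s) * iterInt x' v s t
          + ∑ i, remInt x' (fun r => vfOp V (i :: v) f (y r)) (i :: v) s t := by
    intro v hne hlen
    obtain ⟨j, w, rfl⟩ : ∃ j w, v = j :: w := by
      cases v with
      | nil => exact absurd rfl hne
      | cons j w => exact ⟨j, w, rfl⟩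
    simp only [List.length_cons] at hlen
    have hg1 : ContDiff ℝ 1 (vfOp V (j :: w) f) :=
      vfOp_contDiff_one hV hf _ (by simp only [List.length_cons]; omega)
    have hvfop : ∀ (i : Fin d) (z), vfOp V (i :: j :: w) f z
        = (fderiv ℝ (vfOp V (j :: w) f) z) (V i z) := fun i z => rfl
    have hgexp : ∀ r ∈ Set.Icc s t, vfOp V (j :: w) f (y r)
        = vfOp V (j :: w) f (y s)
          + ∑ i, ∫ u in s..r, x' u i * vfOp V (i :: j :: w) f (y u) := by
      intro r hr
      have h1 := ftcV (vfOp V (j :: w) f) hg1 s r hs hr.1 (hr.2.trans ht)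
      simp_rw [← hvfop] at h1
      exact h1
    have hlenij : ∀ i : Fin d, (i :: j :: w).length ≤ N := by
      intro i; simp only [List.length_cons]; omega
    have hcontH : ∀ i : Fin d,
        ContinuousOn (fun u => vfOp V (i :: j :: w) f (y u)) (Set.Icc s t) :=
      fun i => (vfC _ (hlenij i)).mono (Set.Icc_subset_Icc hs ht)
    have hGiint : ∀ i : Fin d, IntervalIntegrable
        (fun u => x' u i * vfOp V (i :: j :: w) f (y u)) volume s t :=
      fun i => II_mulx i _ s t hst (fun u hu => (hcontH i) u hu)
    have hprim : ∀ i : Fin d, ContinuousOn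
        (fun r => ∫ u in s..r, x' u i * vfOp V (i :: j :: w) f (y u)) (Set.Icc s t) := by
      intro i
      have := intervalIntegral.continuousOn_primitive_interval' (hGiint i)
        (left_mem_uIcc (a := s) (b := t))
      rwa [Set.uIcc_of_le hst] at this
    -- integrability of pieces
    have intA : IntervalIntegrable
        (fun r => (x' r j * iterInt x' w r t) * vfOp V (j :: w) f (y s)) volume s t := by
      have heq : (fun r => (x' r j * iterInt x' w r t) * vfOp V (j :: w) f (y s))
          = fun r => x' r j * (iterInt x' w r t * vfOp V (j :: w) f (y s)) := by
        funext r; ring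
      rw [heq]
      exact II_mulx j _ s t hst ((iterC w t).continuousOn.mul continuousOn_const)
    have intB : ∀ i : Fin d, IntervalIntegrable
        (fun r => (x' r j * iterInt x' w r t)
          * ∫ u in s..r, x' u i * vfOp V (i :: j :: w) f (y u)) volume s t := by
      intro i
      have heq : (fun r => (x' r j * iterInt x' w r t)
            * ∫ u in s..r, x' u i * vfOp V (i :: j :: w) f (y u))
          = fun r => x' r j * (iterInt x' w r t
            * ∫ u in s..r, x' u i * vfOp V (i :: j :: w) f (y u)) := by
        funext r; ring
      rw [heq]
      exact II_mulx j _ s t hst ((iterC w t).continuousOn.mul (hprim i))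
    -- main rewrite of the remainder integral
    have hmain : remInt x' (fun r => vfOp V (j :: w) f (y r)) (j :: w) s t
        = (∫ r in s..t, (x' r j * iterInt x' w r t) * vfOp V (j :: w) f (y s))
          + ∑ i, ∫ r in s..t, (x' r j * iterInt x' w r t)
              * ∫ u in s..r, x' u i * vfOp V (i :: j :: w) f (y u) := by
      have h1 : remInt x' (fun r => vfOp V (j :: w) f (y r)) (j :: w) s t
          = ∫ r in s..t, ((x' r j * iterInt x' w r t) * vfOp V (j :: w) f (y s)
            + ∑ i, (x' r j * iterInt x' w r t)
              * ∫ u in s..r, x' u i * vfOp V (i :: j :: w) f (y u)) := by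
        show (∫ r in s..t, (x' r j * iterInt x' w r t) • vfOp V (j :: w) f (y r)) = _
        apply intervalIntegral.integral_congr
        intro r hr
        rw [Set.uIcc_of_le hst] at hr
        beta_reduce
        rw [smul_eq_mul, hgexp r hr, mul_add, Finset.mul_sum]
      have hsum_int : IntervalIntegrable (fun r => ∑ i : Fin d,
          (x' r j * iterInt x' w r t)
            * ∫ u in s..r, x' u i * vfOp V (i :: j :: w) f (y u)) volume s t := by
        have h2 := IntervalIntegrable.sum (μ := volume) (a := s) (b := t) Finset.univ
          (f := fun (i : Fin d) => fun r => (x' r j * iterInt x' w r t)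
            * ∫ u in s..r, x' u i * vfOp V (i :: j :: w) f (y u)) (fun i _ => intB i)
        have heq : (fun r => ∑ i : Fin d, (x' r j * iterInt x' w r t)
              * ∫ u in s..r, x' u i * vfOp V (i :: j :: w) f (y u))
            = ∑ i : Fin d, fun r => (x' r j * iterInt x' w r t)
              * ∫ u in s..r, x' u i * vfOp V (i :: j :: w) f (y u) := by
          funext r
          rw [Finset.sum_apply]
        rw [heq]
        exact h2
      rw [h1, intervalIntegral.integral_add intA hsum_int,
        intervalIntegral.integral_finset_sum (fun i _ => intB i)]
    rw [hmain]
    congr 1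
    · -- constant part
      rw [intervalIntegral.integral_mul_const]
      rw [mul_comm]
      rfl
    · -- Fubini part
      refine Finset.sum_congr rfl fun i _ => ?_
      obtain ⟨cF, hcF⟩ := isCompact_Icc.exists_bound_of_continuousOn
        ((iterC w t).continuousOn (s := Set.Icc s t))
      obtain ⟨cG, hcG⟩ := isCompact_Icc.exists_bound_of_continuousOn (hcontH i)
      have hFm : Measurable fun r => x' r j * iterInt x' w r t :=
        (x'_meas hx'm j).mul (iterC w t).measurable
      have hGm : AEStronglyMeasurable (fun u => x' u i * vfOp V (i :: j :: w) f (y u))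
          (volume.restrict (Set.Ioc s t)) :=
        ((x'_meas hx'm i).aestronglyMeasurable).mul
          (((hcontH i).mono Set.Ioc_subset_Icc_self).aestronglyMeasurable measurableSet_Ioc)
      have hFb : ∀ r ∈ Set.Ioc s t, |x' r j * iterInt x' w r t| ≤ L * cF := by
        intro r hr
        rw [abs_mul]
        have := hcF r (Set.Ioc_subset_Icc_self hr)
        rw [Real.norm_eq_abs] at this
        exact mul_le_mul ((coord_abs_le_norm _ j).trans (hL r)) this (abs_nonneg _) hL0
      have hGb : ∀ u ∈ Set.Ioc s t,
          |x' u i * vfOp V (i :: j :: w) f (y u)| ≤ L * cG := by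
        intro u hu
        rw [abs_mul]
        have := hcG u (Set.Ioc_subset_Icc_self hu)
        rw [Real.norm_eq_abs] at this
        exact mul_le_mul ((coord_abs_le_norm _ i).trans (hL u)) this (abs_nonneg _) hL0
      have hfub := fubini_tri hst (fun r => x' r j * iterInt x' w r t)
        (fun u => x' u i * vfOp V (i :: j :: w) f (y u)) hFm hGm (L * cF) (L * cG) hFb hGb
      rw [hfub]
      show _ = ∫ u in s..t, (x' u i * iterInt x' (j :: w) u t)
          • vfOp V (i :: j :: w) f (y u)
      apply intervalIntegral.integral_congr
      intro u _
      beta_reduce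
      have hiter : iterInt x' (j :: w) u t
          = ∫ r in u..t, x' r j * iterInt x' w r t := rfl
      rw [smul_eq_mul, hiter]
      ring
  -- list reindexing
  have hofFn_cons : ∀ (m : ℕ) (i : Fin d) (w : Fin m → Fin d),
      List.ofFn (Fin.cons i w : Fin (m + 1) → Fin d) = i :: List.ofFn w := by
    intro m i w
    rw [List.ofFn_succ]
    simp
  have hreindex : ∀ (m : ℕ) (T : List (Fin d) → ℝ),
      (∑ w : Fin m → Fin d, ∑ i : Fin d, T (i :: List.ofFn w))
        = ∑ w : Fin (m + 1) → Fin d, T (List.ofFn w) := by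
    intro m T
    calc (∑ w : Fin m → Fin d, ∑ i : Fin d, T (i :: List.ofFn w))
        = ∑ i : Fin d, ∑ w : Fin m → Fin d, T (i :: List.ofFn w) := Finset.sum_comm
      _ = ∑ p : Fin d × (Fin m → Fin d), T (p.1 :: List.ofFn p.2) := by
          rw [Fintype.sum_prod_type]
      _ = ∑ w : Fin (m + 1) → Fin d, T (List.ofFn w) := by
          rw [← Equiv.sum_comp (Fin.consEquiv (fun _ : Fin (m + 1) => Fin d))
            (fun w => T (List.ofFn w))]
          refine Finset.sum_congr rfl fun p _ => ?_
          beta_reduce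
          rw [show (Fin.consEquiv (fun _ : Fin (m + 1) => Fin d)) p
            = Fin.cons p.1 p.2 from rfl, hofFn_cons]
  intro m
  induction m with
  | zero =>
    intro _
    have hbase := ftcV f (hf.of_le (by simp)) s t hs hst ht
    rw [Finset.Icc_eq_empty (by omega : ¬ (1:ℕ) ≤ 0), Finset.sum_empty, add_zero, hbase]
    congr 1
    rw [← hreindex 0 (fun v => remInt x' (fun r => vfOp V v f (y r)) v s t)]
    rw [Fintype.sum_unique (fun w : Fin 0 → Fin d => ∑ i : Fin d,
      remInt x' (fun r => vfOp V (i :: List.ofFn w) f (y r)) (i :: List.ofFn w) s t)]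
    refine Finset.sum_congr rfl fun i _ => ?_
    show (∫ u in s..t, x' u i * (fderiv ℝ f (y u)) (V i (y u)))
      = remInt x' (fun r => vfOp V (i :: List.ofFn (default : Fin 0 → Fin d)) f (y r))
          (i :: List.ofFn (default : Fin 0 → Fin d)) s t
    rw [List.ofFn_zero]
    show _ = ∫ r in s..t, (x' r i * iterInt x' [] r t) • vfOp V [i] f (y r)
    apply intervalIntegral.integral_congr
    intro u _
    beta_reduce
    have h1 : iterInt x' [] u t = 1 := rfl
    have h2 : vfOp V [i] f (y u) = (fderiv ℝ f (y u)) (V i (y u)) := rfl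
    rw [h1, h2, mul_one, smul_eq_mul]
  | succ m ih =>
    intro hm
    rw [ih (by omega)]
    have hexp : ∀ w : Fin (m + 1) → Fin d,
        remInt x' (fun r => vfOp V (List.ofFn w) f (y r)) (List.ofFn w) s t
          = vfOp V (List.ofFn w) f (y s) * iterInt x' (List.ofFn w) s t
            + ∑ i, remInt x' (fun r => vfOp V (i :: List.ofFn w) f (y r))
                (i :: List.ofFn w) s t := by
      intro w
      refine rem_exp (List.ofFn w) ?_ ?_
      · rw [List.ofFn_succ]; exact List.cons_ne_nil _ _
      · rw [List.length_ofFn]; omega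
    rw [Finset.sum_congr rfl fun w _ => hexp w, Finset.sum_add_distrib]
    rw [hreindex (m + 1) (fun v => remInt x' (fun r => vfOp V v f (y r)) v s t)]
    rw [Finset.sum_Icc_succ_top (by omega : 1 ≤ m + 1)]
    ring

/-- (Stochastic-Taylor type expansion.) For `Lip^N` vector fields, a
Lipschitz driving path, the solution `y = π(0,y₀;x)` and a smooth `f : ℝ^e → ℝ`,
`f(y_t)` equals `f(y_s)` plus the Euler terms of orders `1,…,N−1` evaluated at `y_s`
plus the order-`N` iterated-integral remainder with integrand `V_{i₁}⋯V_{i_N}f(y_{r₁})`. -/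
theorem statement4 {d e N : ℕ} (hN : 0 < N)
    (V : Fin d → EuclideanSpace ℝ (Fin e) → EuclideanSpace ℝ (Fin e)) (B : ℝ)
    (hV : ∀ i, ContDiff ℝ (N : ℕ∞) (V i))
    (hVb : ∀ i, ∀ k ≤ N, ∀ y, ‖iteratedFDeriv ℝ k (V i) y‖ ≤ B)
    (x x' : ℝ → EuclideanSpace ℝ (Fin d)) (hx : IsLipPath x x')
    (y₀ : EuclideanSpace ℝ (Fin e)) (y : ℝ → EuclideanSpace ℝ (Fin e))
    (hy : IsODESol V x' y₀ y)
    (f : EuclideanSpace ℝ (Fin e) → ℝ) (hf : ContDiff ℝ (⊤ : ℕ∞) f) :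
    ∀ s t : ℝ, 0 ≤ s → s ≤ t → t ≤ 1 →
      f (y t) = f (y s)
        + (∑ k ∈ Finset.Icc 1 (N - 1), ∑ w : Fin k → Fin d,
            vfOp V (List.ofFn w) f (y s) * iterInt x' (List.ofFn w) s t)
        + ∑ w : Fin N → Fin d,
            remInt x' (fun r => vfOp V (List.ofFn w) f (y r)) (List.ofFn w) s t := by
  cases N with
  | zero => exact absurd hN (by norm_num)
  | succ N' =>
    intro s t hs hst ht
    obtain ⟨hx'm, ⟨L, hL⟩, -⟩ := hx
    obtain ⟨⟨K, hK⟩, hy0, hyint⟩ := hy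
    have hVb' : ∀ i z, ‖V i z‖ ≤ B := by
      intro i z
      have := hVb i 0 (Nat.zero_le _) z
      rwa [norm_iteratedFDeriv_zero] at this
    have hyint' : ∀ u ∈ Set.Icc (0:ℝ) 1,
        y u = y 0 + ∫ r in (0:ℝ)..u, ∑ i, x' r i • V i (y r) := by
      intro u hu
      rw [hy0]
      exact hyint u hu
    have H := taylor_aux V hV B hVb' x' hx'm L hL y hK.continuousOn hyint' f hf
      s t hs hst ht N' le_rfl
    simpa using H
end

section
/- Let N ≥ 1 and let V₁,…,V_d : ℝ^e → ℝ^e be bounded vector fields with N bounded derivatives. Then there exists a constant C, depending only on N and the norms of the vector fields, such that for every L ≥ 0, every family g = (g^{k,i₁,…,i_k})_{1 ≤ k ≤ N} of real numbers satisfying |g^{k,i₁,…,i_k}| ≤ L^k for all k and all indices, and all y, ỹ ∈ ℝ^e: |I[y, N, g] − I[ỹ, N, g]| ≤ C |y − ỹ| (L + L^N). -/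
open MeasureTheory Set

/-!
Applying a vector field `V` to a function costs one derivative, and by the Leibniz rule for
`y ↦ Df(y)·V(y)` it multiplies the bounds on the remaining derivatives by at most `2 ^ N * B`.
Starting from `H = id`, whose derivatives are bounded by `1`, each `V_{i₁}⋯V_{i_k}H` with
`k ≤ N` is therefore `C¹` with derivative bounded by `(2 ^ N * B) ^ k`, hence Lipschitz with
that constant by the mean value inequality. Summing against `|g^{k,…}| ≤ L ^ k ≤ L + L ^ N`
over the `d ^ k` words of each length `k` gives the estimate.
-/

theorem pow_le_add_pow {R : Type*} [Semiring R] [LinearOrder R] [IsOrderedRing R]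
    {L : R} (hL : 0 ≤ L) {k N : ℕ} (hk : 1 ≤ k) (hkN : k ≤ N) : L ^ k ≤ L + L ^ N := by
  rcases le_total L 1 with h | h
  · calc L ^ k ≤ L ^ 1 := pow_le_pow_of_le_one hL h hk
      _ = L := pow_one L
      _ ≤ L + L ^ N := le_add_of_nonneg_right (pow_nonneg hL N)
  · calc L ^ k ≤ L ^ N := pow_le_pow_right₀ h hkN
      _ ≤ L + L ^ N := le_add_of_nonneg_left hL

section

variable {E F : Type*} [NormedAddCommGroup E] [NormedSpace ℝ E]
  [NormedAddCommGroup F] [NormedSpace ℝ F]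

theorem norm_iteratedFDeriv_id_le_one {j : ℕ} (hj : 1 ≤ j) (y : E) :
    ‖iteratedFDeriv ℝ j (id : E → E) y‖ ≤ 1 := by
  obtain ⟨m, rfl⟩ : ∃ m, j = m + 1 := ⟨j - 1, by omega⟩
  have hDid : fderiv ℝ (id : E → E) = fun _ => ContinuousLinearMap.id ℝ E :=
    funext fun _ => fderiv_id
  rw [← norm_iteratedFDeriv_fderiv, hDid]
  rcases m with _ | m
  · simpa using ContinuousLinearMap.norm_id_le
  · simp [iteratedFDeriv_const_of_ne]

theorem norm_iteratedFDeriv_fderiv_apply_le {f : E → F} {V : E → E} {n : ℕ}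
    (hf : ContDiff ℝ (n + 1 : ℕ) f) (hV : ContDiff ℝ n V) {a b : ℝ}
    (hfa : ∀ j, 1 ≤ j → j ≤ n + 1 → ∀ y, ‖iteratedFDeriv ℝ j f y‖ ≤ a)
    (hVb : ∀ j ≤ n, ∀ y, ‖iteratedFDeriv ℝ j V y‖ ≤ b) {j : ℕ} (hj : j ≤ n) (y : E) :
    ‖iteratedFDeriv ℝ j (fun y => fderiv ℝ f y (V y)) y‖ ≤ 2 ^ j * (a * b) := by
  have hDf : ContDiff ℝ n (fderiv ℝ f) := hf.fderiv_right (by push_cast; exact le_rfl)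
  have ha : 0 ≤ a := (norm_nonneg _).trans (hfa 1 le_rfl (by omega) y)
  calc ‖iteratedFDeriv ℝ j (fun y => fderiv ℝ f y (V y)) y‖
      ≤ ∑ m ∈ Finset.range (j + 1), (j.choose m : ℝ) *
          ‖iteratedFDeriv ℝ m (fderiv ℝ f) y‖ * ‖iteratedFDeriv ℝ (j - m) V y‖ :=
        norm_iteratedFDeriv_clm_apply hDf hV y (by exact_mod_cast hj)
    _ ≤ ∑ m ∈ Finset.range (j + 1), (j.choose m : ℝ) * (a * b) := by
        refine Finset.sum_le_sum fun m hm => ?_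
        rw [Finset.mem_range] at hm
        rw [norm_iteratedFDeriv_fderiv, mul_assoc]
        gcongr
        · exact hfa _ (by omega) (by omega) y
        · exact hVb _ (by omega) y
    _ = 2 ^ j * (a * b) := by
        rw [← Finset.sum_mul, ← Nat.cast_sum, Nat.sum_range_choose]
        push_cast
        ring

variable {d : ℕ} {V : Fin d → E → E} {N : ℕ} {B : ℝ}

@[simp]
theorem vfOp_nil (f : E → F) : vfOp V [] f = f := rfl

theorem vfOp_cons (i : Fin d) (w : List (Fin d)) (f : E → F) :
    vfOp V (i :: w) f = fun y => fderiv ℝ (vfOp V w f) y (V i y) := rfl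

theorem contDiff_vfOp_and_norm_iteratedFDeriv_le (hV : ∀ i, ContDiff ℝ N (V i))
    (hVb : ∀ i, ∀ k ≤ N, ∀ y, ‖iteratedFDeriv ℝ k (V i) y‖ ≤ B)
    {f : E → F} {A : ℝ} (hf : ContDiff ℝ (N + 1 : ℕ) f)
    (hfA : ∀ j, 1 ≤ j → j ≤ N + 1 → ∀ y, ‖iteratedFDeriv ℝ j f y‖ ≤ A)
    (w : List (Fin d)) (hw : w.length ≤ N) :
    ContDiff ℝ (N + 1 - w.length : ℕ) (vfOp V w f) ∧
      ∀ j, 1 ≤ j → j ≤ N + 1 - w.length → ∀ y,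
        ‖iteratedFDeriv ℝ j (vfOp V w f) y‖ ≤ (2 ^ N * B) ^ w.length * A := by
  induction w with
  | nil => exact ⟨hf, by simpa using hfA⟩
  | cons i w ih =>
    simp only [List.length_cons] at hw ⊢
    obtain ⟨hC, hD⟩ := ih (by omega)
    rw [show N + 1 - w.length = N - w.length + 1 by omega] at hC hD
    have hVi : ContDiff ℝ (N - w.length : ℕ) (V i) := (hV i).of_le (by exact_mod_cast N.sub_le _)
    rw [vfOp_cons, show N + 1 - (w.length + 1) = N - w.length by omega]
    refine ⟨(hC.fderiv_right (by push_cast; exact le_rfl)).clm_apply hVi,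
      fun j hj hjN y => ?_⟩
    have hA : 0 ≤ A := (norm_nonneg _).trans (hfA 1 le_rfl (by omega) y)
    have hB : 0 ≤ B := (norm_nonneg _).trans (hVb i 0 N.zero_le y)
    calc ‖iteratedFDeriv ℝ j (fun y => fderiv ℝ (vfOp V w f) y (V i y)) y‖
        ≤ 2 ^ j * ((2 ^ N * B) ^ w.length * A * B) :=
          norm_iteratedFDeriv_fderiv_apply_le hC hVi hD
            (fun k hk => hVb i k (by omega)) hjN y
      _ ≤ 2 ^ N * ((2 ^ N * B) ^ w.length * A * B) := by
          gcongr
          · norm_num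
          · omega
      _ = (2 ^ N * B) ^ (w.length + 1) * A := by ring

theorem norm_vfOp_sub_le (hV : ∀ i, ContDiff ℝ N (V i))
    (hVb : ∀ i, ∀ k ≤ N, ∀ y, ‖iteratedFDeriv ℝ k (V i) y‖ ≤ B)
    {f : E → F} {A : ℝ} (hf : ContDiff ℝ (N + 1 : ℕ) f)
    (hfA : ∀ j, 1 ≤ j → j ≤ N + 1 → ∀ y, ‖iteratedFDeriv ℝ j f y‖ ≤ A)
    {w : List (Fin d)} (hw : w.length ≤ N) (y z : E) :
    ‖vfOp V w f y - vfOp V w f z‖ ≤ (2 ^ N * B) ^ w.length * A * ‖y - z‖ := by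
  obtain ⟨hC, hD⟩ := contDiff_vfOp_and_norm_iteratedFDeriv_le hV hVb hf hfA w hw
  have hdiff : Differentiable ℝ (vfOp V w f) := hC.differentiable (by norm_cast; omega)
  refine convex_univ.norm_image_sub_le_of_norm_fderiv_le (fun x _ => hdiff x) (fun x _ => ?_)
    (mem_univ z) (mem_univ y)
  simpa using hD 1 le_rfl (by omega) x

end

section

variable {d e N : ℕ} {V : Fin d → EuclideanSpace ℝ (Fin e) → EuclideanSpace ℝ (Fin e)}
  {g : List (Fin d) → ℝ}

theorem euler_sub_euler (y z : EuclideanSpace ℝ (Fin e)) :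
    euler V N g y - euler V N g z = ∑ k ∈ Finset.Icc 1 N, ∑ w : Fin k → Fin d,
      g (List.ofFn w) • (vfOp V (List.ofFn w) id y - vfOp V (List.ofFn w) id z) := by
  simp only [euler, ← Finset.sum_sub_distrib, smul_sub]

theorem norm_euler_sub_le {c L : ℝ} (hc : 0 ≤ c) (hL : 0 ≤ L)
    (hg : ∀ w : List (Fin d), 1 ≤ w.length → w.length ≤ N → |g w| ≤ L ^ w.length)
    {y z : EuclideanSpace ℝ (Fin e)}
    (hV : ∀ w : List (Fin d), w.length ≤ N →
      ‖vfOp V w id y - vfOp V w id z‖ ≤ c ^ w.length * ‖y - z‖) :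
    ‖euler V N g y - euler V N g z‖ ≤
      (∑ k ∈ Finset.Icc 1 N, ((d : ℝ) * c) ^ k) * ‖y - z‖ * (L + L ^ N) := by
  have hterm : ∀ k ∈ Finset.Icc 1 N, ∀ w : Fin k → Fin d,
      ‖g (List.ofFn w) • (vfOp V (List.ofFn w) id y - vfOp V (List.ofFn w) id z)‖ ≤
        L ^ k * (c ^ k * ‖y - z‖) := by
    intro k hk w
    rw [Finset.mem_Icc] at hk
    rw [norm_smul, Real.norm_eq_abs]
    gcongr
    · simpa using hg (List.ofFn w) (by simpa using hk.1) (by simpa using hk.2)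
    · simpa using hV (List.ofFn w) (by simpa using hk.2)
  calc ‖euler V N g y - euler V N g z‖
      ≤ ∑ k ∈ Finset.Icc 1 N, ∑ _w : Fin k → Fin d, L ^ k * (c ^ k * ‖y - z‖) := by
        rw [euler_sub_euler]
        exact norm_sum_le_of_le _ fun k hk => norm_sum_le_of_le _ fun w _ => hterm k hk w
    _ = ∑ k ∈ Finset.Icc 1 N, ((d : ℝ) * c) ^ k * ‖y - z‖ * L ^ k := by
        simp only [Finset.sum_const, Finset.card_univ, Fintype.card_fun, Fintype.card_fin,
          nsmul_eq_mul]
        push_cast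
        ring_nf
    _ ≤ ∑ k ∈ Finset.Icc 1 N, ((d : ℝ) * c) ^ k * ‖y - z‖ * (L + L ^ N) := by
        gcongr with k hk
        rw [Finset.mem_Icc] at hk
        exact pow_le_add_pow hL hk.1 hk.2
    _ = (∑ k ∈ Finset.Icc 1 N, ((d : ℝ) * c) ^ k) * ‖y - z‖ * (L + L ^ N) := by
        rw [Finset.sum_mul, Finset.sum_mul]

end

theorem statement7_general {d e N : ℕ}
    (V : Fin d → EuclideanSpace ℝ (Fin e) → EuclideanSpace ℝ (Fin e)) (B : ℝ)
    (hV : ∀ i, ContDiff ℝ (N : ℕ∞) (V i))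
    (hVb : ∀ i, ∀ k ≤ N, ∀ y, ‖iteratedFDeriv ℝ k (V i) y‖ ≤ B) :
    ∃ C : ℝ, ∀ L : ℝ, 0 ≤ L → ∀ g : List (Fin d) → ℝ,
      (∀ w : List (Fin d), 1 ≤ w.length → w.length ≤ N → |g w| ≤ L ^ w.length) →
      ∀ y z : EuclideanSpace ℝ (Fin e),
        ‖euler V N g y - euler V N g z‖ ≤ C * ‖y - z‖ * (L + L ^ N) := by
  -- `B` is only forced to be nonnegative when `d ≠ 0`, so we pass to `max B 0`.
  have hVb' : ∀ i, ∀ k ≤ N, ∀ y, ‖iteratedFDeriv ℝ k (V i) y‖ ≤ max B 0 :=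
    fun i k hk y => (hVb i k hk y).trans (le_max_left _ _)
  refine ⟨∑ k ∈ Finset.Icc 1 N, ((d : ℝ) * (2 ^ N * max B 0)) ^ k,
    fun L hL g hg y z => norm_euler_sub_le (by positivity) hL hg fun w hw => ?_⟩
  simpa using norm_vfOp_sub_le hV hVb' contDiff_id
    (fun j hj _ => norm_iteratedFDeriv_id_le_one hj) hw y z

/-- (Lipschitz dependence of the Euler scheme on the initial point.)
For `Lip^N` vector fields there is a constant `C`, depending only on `N` and the vector
fields, such that whenever the coefficients `g` satisfy the homogeneous bound
`|g^{k,i₁,…,i_k}| ≤ L^k`, one has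
`‖I[y,N,g] − I[z,N,g]‖ ≤ C ‖y − z‖ (L + L^N)`. -/
theorem statement7 {d e N : ℕ} (hN : 1 ≤ N)
    (V : Fin d → EuclideanSpace ℝ (Fin e) → EuclideanSpace ℝ (Fin e)) (B : ℝ)
    (hV : ∀ i, ContDiff ℝ (N : ℕ∞) (V i))
    (hVb : ∀ i, ∀ k ≤ N, ∀ y, ‖iteratedFDeriv ℝ k (V i) y‖ ≤ B) :
    ∃ C : ℝ, ∀ L : ℝ, 0 ≤ L → ∀ g : List (Fin d) → ℝ,
      (∀ w : List (Fin d), 1 ≤ w.length → w.length ≤ N → |g w| ≤ L ^ w.length) →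
      ∀ y z : EuclideanSpace ℝ (Fin e),
        ‖euler V N g y - euler V N g z‖ ≤ C * ‖y - z‖ * (L + L ^ N) :=
  statement7_general V B hV hVb
end

section
/- (Iteration lemma) Let p ≥ 1, θ > 1 and c > 0. Let ρ : (0,1] → [0,∞) be a bounded function such that for all r ∈ (0,1]: ρ(r) ≤ 2^{1−θ} (1 + c r^{1/p}) ρ(r/2) + c. Then for all r ∈ (0,1]: ρ(r) ≤ (c / (1 − 2^{1−θ})) · Σ_{k=0}^{∞} (2^{1−θ})^k Π_{j=0}^{k−1} (1 + c 2^{−j/p}), and in particular ρ is bounded by a finite constant depending only on θ, p and c. -/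
open Set

/-- (Iteration lemma.) Let `p ≥ 1`, `θ > 1`, `c > 0`, and let
`ρ : (0,1] → [0,∞)` be bounded with `ρ(r) ≤ 2^{1−θ}(1 + c r^{1/p}) ρ(r/2) + c` for all
`r ∈ (0,1]`. Then for all `r ∈ (0,1]`,
`ρ(r) ≤ (c/(1 − 2^{1−θ})) Σ_{k=0}^∞ (2^{1−θ})^k Π_{j=0}^{k−1} (1 + c 2^{−j/p})`;
in particular `ρ` is bounded by a finite constant depending only on `θ, p, c`. -/
theorem statement13 (p θ c : ℝ) (hp : 1 ≤ p) (hθ : 1 < θ) (hc : 0 < c)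
    (ρ : ℝ → ℝ)
    (hρ0 : ∀ r ∈ Set.Ioc (0:ℝ) 1, 0 ≤ ρ r)
    (hρbd : ∃ D : ℝ, ∀ r ∈ Set.Ioc (0:ℝ) 1, ρ r ≤ D)
    (hrec : ∀ r ∈ Set.Ioc (0:ℝ) 1,
      ρ r ≤ (2:ℝ) ^ ((1:ℝ) - θ) * (1 + c * r ^ (1 / p)) * ρ (r / 2) + c) :
    ∀ r ∈ Set.Ioc (0:ℝ) 1,
      ρ r ≤ (c / (1 - (2:ℝ) ^ ((1:ℝ) - θ))) *
        ∑' k : ℕ, ((2:ℝ) ^ ((1:ℝ) - θ)) ^ k *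
          ∏ j ∈ Finset.range k, (1 + c * (2:ℝ) ^ (-(j : ℝ) / p)) := by
  obtain ⟨D₀, hD₀⟩ := hρbd
  set D := max D₀ 0 with hDdef
  have hDnn : (0:ℝ) ≤ D := le_max_right _ _
  have hDb : ∀ r ∈ Set.Ioc (0:ℝ) 1, ρ r ≤ D :=
    fun r hr => (hD₀ r hr).trans (le_max_left _ _)
  have hp0 : (0:ℝ) < p := lt_of_lt_of_le one_pos hp
  set q := (2:ℝ) ^ ((1:ℝ) - θ) with hqdef
  have hq0 : 0 < q := Real.rpow_pos_of_pos (by norm_num) _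
  have hq1 : q < 1 := Real.rpow_lt_one_of_one_lt_of_neg (by norm_num) (by linarith)
  set P : ℕ → ℝ := fun k => ∏ j ∈ Finset.range k, (1 + c * (2:ℝ) ^ (-(j : ℝ) / p))
    with hPdef
  set Q : ℝ → ℕ → ℝ := fun r k => ∏ j ∈ Finset.range k, (1 + c * (r / 2 ^ j) ^ (1 / p))
    with hQdef
  -- each dyadic factor is bounded by the r-free factor
  have hfac : ∀ (j : ℕ) (r : ℝ), r ∈ Set.Ioc (0:ℝ) 1 →
      (r / 2 ^ j) ^ (1 / p) ≤ (2:ℝ) ^ (-(j : ℝ) / p) := by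
    intro j r hr
    have h1 : (r / 2 ^ j) ^ (1/p) ≤ (((2:ℝ) ^ j)⁻¹) ^ (1/p) := by
      apply Real.rpow_le_rpow (div_nonneg hr.1.le (by positivity))
      · rw [div_eq_mul_inv]
        calc r * ((2:ℝ)^j)⁻¹ ≤ 1 * ((2:ℝ)^j)⁻¹ :=
              mul_le_mul_of_nonneg_right hr.2 (by positivity)
          _ = ((2:ℝ)^j)⁻¹ := one_mul _
      · exact (one_div_pos.2 hp0).le
    refine h1.trans_eq ?_
    rw [show ((2:ℝ)^j)⁻¹ = (2:ℝ) ^ (-(j:ℝ)) by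
          rw [← Real.rpow_natCast 2 j, ← Real.rpow_neg (by norm_num)],
        ← Real.rpow_mul (by norm_num), neg_mul, mul_one_div, neg_div]
  have hQfac_nn : ∀ (j : ℕ) (r : ℝ), 0 < r → (0:ℝ) ≤ 1 + c * (r / 2 ^ j) ^ (1 / p) := by
    intro j r hr
    have h := mul_nonneg hc.le
      (Real.rpow_nonneg (div_nonneg hr.le (by positivity : (0:ℝ) ≤ 2 ^ j)) (1/p))
    linarith
  -- Q r k ≤ P k
  have hQP : ∀ k (r : ℝ), r ∈ Set.Ioc (0:ℝ) 1 → Q r k ≤ P k := by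
    intro k r hr
    apply Finset.prod_le_prod
    · intro j _; exact hQfac_nn j r hr.1
    · intro j _
      have h := mul_le_mul_of_nonneg_left (hfac j r hr) hc.le
      linarith
  have hP1 : ∀ k, (1:ℝ) ≤ P k := by
    intro k
    show (1:ℝ) ≤ ∏ j ∈ Finset.range k, (1 + c * (2:ℝ) ^ (-(j : ℝ) / p))
    calc (1:ℝ) = ∏ _j ∈ Finset.range k, (1:ℝ) := (Finset.prod_const_one).symm
      _ ≤ _ := Finset.prod_le_prod (fun j _ => zero_le_one) (fun j _ => by
            have : (0:ℝ) ≤ c * (2:ℝ) ^ (-(j:ℝ)/p) :=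
              mul_nonneg hc.le (Real.rpow_nonneg (by norm_num) _)
            linarith)
  have hP0 : ∀ k, (0:ℝ) ≤ P k := fun k => le_trans zero_le_one (hP1 k)
  -- uniform bound on P
  set t := (2:ℝ) ^ (-(1:ℝ)/p) with htdef
  have ht0 : 0 < t := Real.rpow_pos_of_pos (by norm_num) _
  have ht1 : t < 1 := Real.rpow_lt_one_of_one_lt_of_neg (by norm_num)
    (div_neg_of_neg_of_pos (by norm_num) hp0)
  have htj : ∀ j : ℕ, (2:ℝ) ^ (-(j:ℝ)/p) = t ^ j := by
    intro j
    rw [htdef, ← Real.rpow_natCast ((2:ℝ) ^ (-(1:ℝ)/p)) j, ← Real.rpow_mul (by norm_num)]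
    ring_nf
  set M := Real.exp (c * (1 - t)⁻¹) with hMdef
  have hPM : ∀ k, P k ≤ M := by
    intro k
    have h1 : P k ≤ Real.exp (∑ j ∈ Finset.range k, c * (2:ℝ) ^ (-(j:ℝ)/p)) := by
      rw [Real.exp_sum]
      show (∏ j ∈ Finset.range k, (1 + c * (2:ℝ) ^ (-(j : ℝ) / p))) ≤ _
      apply Finset.prod_le_prod
      · intro j _
        have : (0:ℝ) ≤ c * (2:ℝ) ^ (-(j:ℝ)/p) :=
          mul_nonneg hc.le (Real.rpow_nonneg (by norm_num) _)
        linarith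
      · intro j _
        linarith [Real.add_one_le_exp (c * (2:ℝ) ^ (-(j:ℝ)/p))]
    have h2 : (∑ j ∈ Finset.range k, c * (2:ℝ) ^ (-(j:ℝ)/p)) ≤ c * (1 - t)⁻¹ := by
      have : (∑ j ∈ Finset.range k, c * (2:ℝ) ^ (-(j:ℝ)/p))
          = c * ∑ j ∈ Finset.range k, t ^ j := by
        rw [Finset.mul_sum]
        exact Finset.sum_congr rfl fun j _ => by rw [htj j]
      rw [this]
      apply mul_le_mul_of_nonneg_left _ hc.le
      have hs : Summable (fun j : ℕ => t ^ j) := summable_geometric_of_lt_one ht0.le ht1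
      calc (∑ j ∈ Finset.range k, t ^ j) ≤ ∑' j : ℕ, t ^ j :=
            Summable.sum_le_tsum _ (fun j _ => pow_nonneg ht0.le j) hs
        _ = (1 - t)⁻¹ := tsum_geometric_of_lt_one ht0.le ht1
    exact h1.trans (Real.exp_le_exp.2 h2)
  have hM0 : 0 < M := Real.exp_pos _
  -- summability of the series
  have hsum : Summable (fun k : ℕ => q ^ k * P k) := by
    apply Summable.of_nonneg_of_le
      (fun k => mul_nonneg (pow_nonneg hq0.le k) (hP0 k))
      (fun k => ?_) ((summable_geometric_of_lt_one hq0.le hq1).mul_left M)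
    calc q ^ k * P k ≤ q ^ k * M :=
          mul_le_mul_of_nonneg_left (hPM k) (pow_nonneg hq0.le k)
      _ = M * q ^ k := mul_comm _ _
  -- the iteration
  have key : ∀ n : ℕ, ∀ r ∈ Set.Ioc (0:ℝ) 1,
      ρ r ≤ q ^ n * Q r n * D + c * ∑ k ∈ Finset.range n, q ^ k * Q r k := by
    intro n
    induction n with
    | zero =>
      intro r hr
      simp only [pow_zero, hQdef, Finset.range_zero, Finset.prod_empty, Finset.sum_empty,
        one_mul, mul_zero, add_zero]
      exact hDb r hr
    | succ n ih =>
      intro r hr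
      have hr2 : r / 2 ∈ Set.Ioc (0:ℝ) 1 := ⟨by linarith [hr.1], by linarith [hr.2]⟩
      have hA : (0:ℝ) ≤ q * (1 + c * r ^ (1/p)) := by
        have h : (0:ℝ) ≤ c * r ^ (1/p) := mul_nonneg hc.le (Real.rpow_nonneg hr.1.le _)
        exact mul_nonneg hq0.le (by linarith)
      have step1 : ρ r ≤ q * (1 + c * r ^ (1/p)) *
          (q ^ n * Q (r/2) n * D + c * ∑ k ∈ Finset.range n, q ^ k * Q (r/2) k) + c := by
        refine (hrec r hr).trans ?_
        have := mul_le_mul_of_nonneg_left (ih (r/2) hr2) hA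
        linarith
      refine step1.trans_eq ?_
      -- the structural identity
      have hdiv : ∀ j : ℕ, (r / 2) / 2 ^ j = r / 2 ^ (j + 1) := by
        intro j; rw [div_div, pow_succ]; ring_nf
      have hQsucc : ∀ k, Q r (k + 1) = (1 + c * r ^ (1/p)) * Q (r/2) k := by
        intro k
        rw [hQdef]
        simp only
        rw [Finset.prod_range_succ']
        have : ∀ j ∈ Finset.range k,
            (1 + c * (r / 2 ^ (j+1)) ^ (1/p)) = (1 + c * ((r/2) / 2 ^ j) ^ (1/p)) := by
          intro j _; rw [hdiv j]
        rw [Finset.prod_congr rfl this, pow_zero, div_one, mul_comm]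
      have hsum_succ : ∑ k ∈ Finset.range (n+1), q ^ k * Q r k
          = q * (1 + c * r ^ (1/p)) * (∑ k ∈ Finset.range n, q ^ k * Q (r/2) k) + 1 := by
        rw [Finset.sum_range_succ' (fun k => q ^ k * Q r k), Finset.mul_sum]
        have h0 : Q r 0 = 1 := by simp [hQdef]
        rw [h0]
        congr 1
        · exact Finset.sum_congr rfl fun k _ => by rw [hQsucc k, pow_succ]; ring
        · simp
      rw [hsum_succ, hQsucc n, pow_succ]
      ring
  -- pass to the limit
  intro r hr
  set S := ∑' k : ℕ, q ^ k * P k with hSdef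
  have hS0 : 0 ≤ S := tsum_nonneg fun k => mul_nonneg (pow_nonneg hq0.le k) (hP0 k)
  have hbound : ∀ n : ℕ, ρ r ≤ q ^ n * M * D + c * ∑ k ∈ Finset.range n, q ^ k * P k := by
    intro n
    refine (key n r hr).trans ?_
    have h1 : q ^ n * Q r n * D ≤ q ^ n * M * D := by
      apply mul_le_mul_of_nonneg_right _ hDnn
      exact mul_le_mul_of_nonneg_left ((hQP n r hr).trans (hPM n)) (pow_nonneg hq0.le n)
    have h2 : (∑ k ∈ Finset.range n, q ^ k * Q r k) ≤ ∑ k ∈ Finset.range n, q ^ k * P k :=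
      Finset.sum_le_sum fun k _ =>
        mul_le_mul_of_nonneg_left (hQP k r hr) (pow_nonneg hq0.le k)
    have h3 := mul_le_mul_of_nonneg_left h2 hc.le
    linarith
  have hlim : Filter.Tendsto
      (fun n : ℕ => q ^ n * M * D + c * ∑ k ∈ Finset.range n, q ^ k * P k)
      Filter.atTop (nhds (0 * M * D + c * S)) := by
    apply Filter.Tendsto.add
    · exact ((tendsto_pow_atTop_nhds_zero_of_lt_one hq0.le hq1).mul_const M).mul_const D
    · exact (hsum.hasSum.tendsto_sum_nat).const_mul c
  have hρS : ρ r ≤ c * S := by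
    have := ge_of_tendsto' hlim hbound
    simpa using this
  refine hρS.trans ?_
  apply mul_le_mul_of_nonneg_right _ hS0
  rw [le_div_iff₀ (by linarith)]
  nlinarith [hc.le, hq0.le]
end

section
/- For every real p ≥ 1, every b ≥ e and every integer k ≥ 1: Σ_{j=0}^{k−1} 2^{−pj} / (1 + b·2^{−pj}) ≤ 3 (ln b) / b. The same bound holds for the infinite sum Σ_{j=0}^{∞} 2^{−pj} / (1 + b·2^{−pj}). -/
/-!
Put `t j = 2^{-pj}`, so that `t (j+1) ≤ t j / 2` because `p ≥ 1`. The elementary bound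
`log x - log y ≥ (x - y) / x` with `x = 1 + b t j`, `y = 1 + b t (j+1)` gives
`t j / (1 + b t j) ≤ 2 (g j - g (j+1)) / b` for `g j = log (1 + b t j)`, a discrete form of the
comparison with `∫ 2^{-px} / (1 + b 2^{-px}) dx`. The sum telescopes to at most
`2 log (1 + b) / b`, and `2 log (1 + b) ≤ 3 log b` once `b ≥ e`.
-/

open Finset Real

lemma sub_div_le_log_sub_log {x y : ℝ} (hx : 0 < x) (hy : 0 < y) :
    (x - y) / x ≤ log x - log y := by
  have h := one_sub_inv_le_log_of_pos (div_pos hx hy)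
  rwa [log_div hx.ne' hy.ne', inv_div, one_sub_div hx.ne'] at h

section GeometricDecay

variable {t : ℕ → ℝ} {b r : ℝ}

lemma div_one_add_mul_le_log_sub_log (hb : 0 < b) (hr : r < 1) (ht : ∀ j, 0 ≤ t j)
    (hrt : ∀ j, t (j + 1) ≤ r * t j) (j : ℕ) :
    t j / (1 + b * t j) ≤
      (log (1 + b * t j) - log (1 + b * t (j + 1))) / ((1 - r) * b) := by
  have hden : 0 < 1 + b * t j := by nlinarith [ht j]
  have hden' : 0 < 1 + b * t (j + 1) := by nlinarith [ht (j + 1)]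
  rw [le_div_iff₀ (by nlinarith), div_mul_eq_mul_div]
  calc t j * ((1 - r) * b) / (1 + b * t j)
      ≤ ((1 + b * t j) - (1 + b * t (j + 1))) / (1 + b * t j) := by
        gcongr; nlinarith [hrt j]
    _ ≤ _ := sub_div_le_log_sub_log hden hden'

lemma sum_range_div_one_add_mul_le (hb : 0 < b) (hr : r < 1) (ht : ∀ j, 0 ≤ t j)
    (hrt : ∀ j, t (j + 1) ≤ r * t j) (k : ℕ) :
    ∑ j ∈ range k, t j / (1 + b * t j) ≤ log (1 + b * t 0) / ((1 - r) * b) := by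
  calc ∑ j ∈ range k, t j / (1 + b * t j)
      ≤ ∑ j ∈ range k, (log (1 + b * t j) - log (1 + b * t (j + 1))) / ((1 - r) * b) :=
        sum_le_sum fun j _ => div_one_add_mul_le_log_sub_log hb hr ht hrt j
    _ = (log (1 + b * t 0) - log (1 + b * t k)) / ((1 - r) * b) := by
        rw [← sum_div, sum_range_sub' (fun j => log (1 + b * t j))]
    _ ≤ log (1 + b * t 0) / ((1 - r) * b) := by
        gcongr
        exact sub_le_self _ (log_nonneg (by nlinarith [ht k]))

lemma tsum_div_one_add_mul_le (hb : 0 < b) (hr : r < 1) (ht : ∀ j, 0 ≤ t j)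
    (hrt : ∀ j, t (j + 1) ≤ r * t j) :
    ∑' j, t j / (1 + b * t j) ≤ log (1 + b * t 0) / ((1 - r) * b) :=
  tsum_le_of_sum_range_le (fun j => div_nonneg (ht j) (by nlinarith [ht j]))
    (sum_range_div_one_add_mul_le hb hr ht hrt)

end GeometricDecay

lemma two_rpow_neg_mul_succ_le {p : ℝ} (hp : 1 ≤ p) (j : ℕ) :
    (2 : ℝ) ^ (-(p * ((j + 1 : ℕ) : ℝ))) ≤ 1 / 2 * (2 : ℝ) ^ (-(p * (j : ℝ))) := by
  have h : (2 : ℝ) ^ (-p) ≤ 2 ^ (-1 : ℝ) := rpow_le_rpow_of_exponent_le one_le_two (by linarith)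
  rw [rpow_neg_one] at h
  calc (2 : ℝ) ^ (-(p * ((j + 1 : ℕ) : ℝ))) = 2 ^ (-p) * 2 ^ (-(p * (j : ℝ))) := by
        rw [← rpow_add two_pos]; push_cast; ring_nf
    _ ≤ 1 / 2 * 2 ^ (-(p * (j : ℝ))) := by
        rw [one_div]; gcongr

lemma two_mul_log_one_add_le {b : ℝ} (hb : exp 1 ≤ b) : 2 * log (1 + b) ≤ 3 * log b := by
  have hb0 : 0 < b := (exp_pos 1).trans_le hb
  have hlog : 1 ≤ log b := by rwa [le_log_iff_exp_le hb0]
  have hb2 : 2 ≤ b := by linarith [exp_one_gt_d9]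
  have h : log (1 + b) - log b ≤ 1 / b := by
    have := log_le_sub_one_of_pos (div_pos (by linarith : (0 : ℝ) < 1 + b) hb0)
    rwa [log_div (by linarith) hb0.ne', add_div, div_self hb0.ne', add_sub_cancel_right] at this
  have h' : 1 / b ≤ 1 / 2 := one_div_le_one_div_of_le two_pos hb2
  linarith

/-- For every `p ≥ 1`, `b ≥ e` and integer `k ≥ 1`,
`Σ_{j=0}^{k−1} 2^{−pj}/(1 + b 2^{−pj}) ≤ 3 (ln b)/b`, and the same bound holds for the
infinite sum. -/
theorem statement14 (p b : ℝ) (hp : 1 ≤ p) (hb : Real.exp 1 ≤ b) :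
    (∀ k : ℕ, 1 ≤ k →
      ∑ j ∈ Finset.range k,
        (2:ℝ) ^ (-(p * (j : ℝ))) / (1 + b * (2:ℝ) ^ (-(p * (j : ℝ)))) ≤
        3 * Real.log b / b) ∧
    ∑' j : ℕ, (2:ℝ) ^ (-(p * (j : ℝ))) / (1 + b * (2:ℝ) ^ (-(p * (j : ℝ)))) ≤
      3 * Real.log b / b := by
  set t : ℕ → ℝ := fun j => (2 : ℝ) ^ (-(p * (j : ℝ)))
  have hb0 : 0 < b := (exp_pos 1).trans_le hb
  have ht : ∀ j, 0 ≤ t j := fun j => (rpow_pos_of_pos two_pos _).le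
  have hrt : ∀ j, t (j + 1) ≤ 1 / 2 * t j := two_rpow_neg_mul_succ_le hp
  have hbound : log (1 + b * t 0) / ((1 - 1 / 2) * b) ≤ 3 * log b / b := by
    have ht0 : t 0 = 1 := by simp [t]
    rw [ht0, mul_one, show (1 - 1 / 2 : ℝ) * b = b / 2 by ring, div_div_eq_mul_div]
    gcongr ?_ / _
    linarith [two_mul_log_one_add_le hb]
  exact ⟨fun k _ => (sum_range_div_one_add_mul_le hb0 (by norm_num) ht hrt k).trans hbound,
    (tsum_div_one_add_mul_le hb0 (by norm_num) ht hrt).trans hbound⟩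
end

section
/- Let a ∈ (0,1), p ≥ 1 and b ≥ e. Then Σ_{k=0}^{∞} a^k Π_{j=0}^{k−1} (1 + b·2^{−pj}) ≤ (1/(1−a)) · exp( e/(1 − 2^{−p}) ) · exp( (3/2)(ln b)² ). In particular, as a function of b the sum grows at most like exp((3/2)(ln b)²). -/
/-!
With `L = log b ≥ 1` and `c = p log 2 ≥ log 2`, the `j`-th factor is `1 + exp (L - c j)`, and
the products are bounded uniformly in `k`. For `j < K = ⌈L / c⌉` the factor is at most
`2 exp (L - c j)`, so these contribute at most `exp (K (log 2 + L) - c K (K - 1) / 2)`, which an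
elementary quadratic estimate bounds by `exp ((3/2) L² + e - 1)`. For `j ≥ K` the factor is at
most `exp (exp (L - c j))`, and the exponents form a geometric series summing to at most
`1 / (1 - 2^{-p})`. The series in `k` is then dominated by a geometric series in `a`.
-/

open Real Finset

lemma one_add_exp_le_exp_log_two_add {t : ℝ} (ht : 0 ≤ t) : 1 + exp t ≤ exp (log 2 + t) := by
  rw [exp_add, exp_log two_pos]
  linarith [one_le_exp ht]

lemma sum_range_natCast (K : ℕ) : ∑ j ∈ range K, (j : ℝ) = K * (K - 1) / 2 := by
  induction K with
  | zero => simp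
  | succ n ih => rw [sum_range_succ, ih]; push_cast; ring

lemma prod_range_one_add_exp_le_of_forall_le {L c : ℝ} {K : ℕ} (hK : ∀ j < K, c * j ≤ L) :
    ∏ j ∈ range K, (1 + exp (L - c * j)) ≤ exp (K * (log 2 + L) - c * K * (K - 1) / 2) :=
  calc ∏ j ∈ range K, (1 + exp (L - c * j))
      ≤ ∏ j ∈ range K, exp (log 2 + (L - c * j)) :=
        prod_le_prod (fun _ _ ↦ by positivity) fun j hj ↦
          one_add_exp_le_exp_log_two_add (by linarith [hK j (mem_range.1 hj)])
    _ = exp (K * (log 2 + L) - c * K * (K - 1) / 2) := by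
        rw [← exp_sum, sum_add_distrib, sum_sub_distrib, ← mul_sum, sum_range_natCast]
        simp only [sum_const, card_range, nsmul_eq_mul]
        ring_nf

lemma prod_Ico_one_add_exp_le_of_le {L c : ℝ} {K : ℕ} (hc : 0 < c) (hK : L ≤ c * K)
    (n : ℕ) :
    ∏ j ∈ Ico K n, (1 + exp (L - c * j)) ≤ exp (1 / (1 - exp (-c))) := by
  have hr1 : exp (-c) < 1 := exp_lt_one_iff.2 (neg_lt_zero.2 hc)
  have hpow (j : ℕ) : exp (L - c * j) = exp L * exp (-c) ^ j := by
    rw [← exp_nat_mul, ← exp_add]; ring_nf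
  calc ∏ j ∈ Ico K n, (1 + exp (L - c * j))
      ≤ ∏ j ∈ Ico K n, exp (exp (L - c * j)) :=
        prod_le_prod (fun _ _ ↦ by positivity) fun j _ ↦ by
          linarith [add_one_le_exp (exp (L - c * j))]
    _ = exp (exp L * ∑ j ∈ Ico K n, exp (-c) ^ j) := by
        rw [← exp_sum, mul_sum]; simp only [hpow]
    _ ≤ exp (exp L * (exp (-c) ^ K / (1 - exp (-c)))) := by
        gcongr; exact geom_sum_Ico_le_of_lt_one (exp_pos _).le hr1
    _ ≤ exp (1 / (1 - exp (-c))) := by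
        rw [← mul_div_assoc, ← hpow]
        gcongr
        exact exp_le_one_iff.2 (by linarith)

/- If `c ≤ 2L`, the left side is a concave quadratic in `K` whose maximum is
`(log 2 + L + c/2)² / (2c)`; after `c² ≤ 2Lc` the resulting bound is linear and increasing
in `c`, so it suffices to check it at `c = log 2`. If `c > 2L`, the hypothesis forces `K ≤ 1`. -/
lemma mul_log_two_add_sub_mul_le {L c : ℝ} {K : ℕ} (hL : 1 ≤ L) (hc : log 2 ≤ c)
    (hK : c * (K - 1) < L) :
    K * (log 2 + L) - c * K * (K - 1) / 2 ≤ 3 / 2 * L ^ 2 + (exp 1 - 1) := by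
  have hlog_gt := log_two_gt_d9
  have hlog_lt := log_two_lt_d9
  have hexp_gt := exp_one_gt_d9
  have hc0 : 0 < c := by linarith
  rcases le_or_gt c (2 * L) with hc2 | hc2
  · have hmax : 2 * c * (K * (log 2 + L) - c * K * (K - 1) / 2) ≤ (log 2 + L + c / 2) ^ 2 := by
      nlinarith [sq_nonneg (c * K - (log 2 + L + c / 2))]
    have hslope : 0 ≤ 3 * L ^ 2 - 3 / 2 * L + 2 * (exp 1 - 1) - log 2 := by nlinarith
    have hat_log_two :
        (log 2 + L) ^ 2 ≤ log 2 * (3 * L ^ 2 - 3 / 2 * L + 2 * (exp 1 - 1) - log 2) := by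
      nlinarith [mul_nonneg (sub_nonneg.2 hlog_gt.le) (sq_nonneg L),
        mul_nonneg (sub_nonneg.2 hlog_lt.le) (zero_le_one.trans hL),
        mul_nonneg (sub_nonneg.2 hexp_gt.le) (log_nonneg one_le_two),
        mul_nonneg (sub_nonneg.2 hlog_lt.le) (log_nonneg one_le_two), sq_nonneg (L - 9 / 8)]
    have hsq : (log 2 + L + c / 2) ^ 2 ≤ 2 * c * (3 / 2 * L ^ 2 + (exp 1 - 1)) := by
      nlinarith [mul_nonneg (sub_nonneg.2 hc) hslope,
        mul_nonneg hc0.le (sub_nonneg.2 hc2)]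
    nlinarith
  · have hK1 : K ≤ 1 := by
      have : (K : ℝ) < 2 := by nlinarith
      exact Nat.le_of_lt_succ (by exact_mod_cast this)
    interval_cases K <;> norm_num <;> nlinarith

lemma prod_range_one_add_exp_le_of_le_mul {L c : ℝ} {K : ℕ} (hc : 0 < c)
    (hhead : ∀ j < K, c * j ≤ L) (htail : L ≤ c * K) (n : ℕ) :
    ∏ j ∈ range n, (1 + exp (L - c * j)) ≤
      exp (K * (log 2 + L) - c * K * (K - 1) / 2 + 1 / (1 - exp (-c))) :=
  calc ∏ j ∈ range n, (1 + exp (L - c * j))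
      ≤ ∏ j ∈ range (max n K), (1 + exp (L - c * j)) :=
        prod_le_prod_of_subset_of_one_le (range_subset_range.2 (le_max_left n K))
          (fun _ _ ↦ by positivity) fun j _ _ ↦ by linarith [exp_pos (L - c * j)]
    _ = (∏ j ∈ range K, (1 + exp (L - c * j))) *
          ∏ j ∈ Ico K (max n K), (1 + exp (L - c * j)) :=
        (prod_range_mul_prod_Ico _ (le_max_right n K)).symm
    _ ≤ exp (K * (log 2 + L) - c * K * (K - 1) / 2) * exp (1 / (1 - exp (-c))) :=
        mul_le_mul (prod_range_one_add_exp_le_of_forall_le hhead)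
          (prod_Ico_one_add_exp_le_of_le hc htail _) (by positivity) (by positivity)
    _ = _ := (exp_add _ _).symm

lemma prod_range_one_add_exp_le {L c : ℝ} (hL : 1 ≤ L) (hc : log 2 ≤ c) (n : ℕ) :
    ∏ j ∈ range n, (1 + exp (L - c * j)) ≤ exp (3 / 2 * L ^ 2 + exp 1 / (1 - exp (-c))) := by
  have hc0 : 0 < c := (log_pos one_lt_two).trans_le hc
  set K := ⌈L / c⌉₊
  have hhead (j : ℕ) (hj : j < K) : c * j ≤ L := by
    have := Nat.lt_ceil.1 hj
    rw [lt_div_iff₀ hc0] at this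
    linarith
  have htail : L ≤ c * K := by
    have := Nat.le_ceil (L / c)
    rwa [div_le_iff₀ hc0, mul_comm] at this
  have hK : c * (K - 1) < L := by
    have := Nat.ceil_lt_add_one (div_nonneg (zero_le_one.trans hL) hc0.le)
    rw [← sub_lt_iff_lt_add, lt_div_iff₀ hc0] at this
    linarith
  refine (prod_range_one_add_exp_le_of_le_mul hc0 hhead htail n).trans (exp_le_exp.2 ?_)
  have hq : 0 < 1 - exp (-c) := sub_pos.2 (exp_lt_one_iff.2 (neg_lt_zero.2 hc0))
  have hdiv : exp 1 - 1 ≤ (exp 1 - 1) / (1 - exp (-c)) :=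
    le_div_self (sub_nonneg.2 (one_le_exp zero_le_one)) hq (by linarith [exp_pos (-c)])
  have hsplit :
      exp 1 / (1 - exp (-c)) = 1 / (1 - exp (-c)) + (exp 1 - 1) / (1 - exp (-c)) := by ring
  linarith [mul_log_two_add_sub_mul_le hL hc hK]

lemma tsum_geometric_mul_le {a C : ℝ} {f : ℕ → ℝ} (ha0 : 0 ≤ a) (ha1 : a < 1)
    (hf0 : ∀ k, 0 ≤ f k) (hf : ∀ k, f k ≤ C) : ∑' k, a ^ k * f k ≤ 1 / (1 - a) * C := by
  have hgeom : Summable fun k ↦ a ^ k * C := (summable_geometric_of_lt_one ha0 ha1).mul_right C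
  have hterm (k : ℕ) : a ^ k * f k ≤ a ^ k * C :=
    mul_le_mul_of_nonneg_left (hf k) (pow_nonneg ha0 k)
  calc ∑' k, a ^ k * f k ≤ ∑' k, a ^ k * C :=
        Summable.tsum_le_tsum hterm
          (hgeom.of_nonneg_of_le (fun k ↦ mul_nonneg (pow_nonneg ha0 k) (hf0 k)) hterm) hgeom
    _ = 1 / (1 - a) * C := by rw [tsum_mul_right, tsum_geometric_of_lt_one ha0 ha1, one_div]

/-- For `a ∈ (0,1)`, `p ≥ 1` and `b ≥ e`,
`Σ_{k=0}^∞ a^k Π_{j=0}^{k−1}(1 + b 2^{−pj}) ≤ (1/(1−a)) exp(e/(1−2^{−p})) exp((3/2)(ln b)²)`;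
in particular the sum grows in `b` at most like `exp((3/2)(ln b)²)`. -/
theorem statement15 (a p b : ℝ) (ha0 : 0 < a) (ha1 : a < 1) (hp : 1 ≤ p)
    (hb : Real.exp 1 ≤ b) :
    ∑' k : ℕ, a ^ k *
        ∏ j ∈ Finset.range k, (1 + b * (2:ℝ) ^ (-(p * (j : ℝ)))) ≤
      (1 / (1 - a)) * Real.exp (Real.exp 1 / (1 - (2:ℝ) ^ (-p))) *
        Real.exp ((3 / 2) * Real.log b ^ 2) := by
  have hb0 : 0 < b := (exp_pos 1).trans_le hb
  have hL : 1 ≤ log b := (le_log_iff_exp_le hb0).2 hb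
  have hc : log 2 ≤ p * log 2 := le_mul_of_one_le_left (log_nonneg one_le_two) hp
  have hq : (2:ℝ) ^ (-p) = exp (-(p * log 2)) := by rw [rpow_def_of_pos two_pos]; ring_nf
  have hfactor (j : ℕ) : b * (2:ℝ) ^ (-(p * j)) = exp (log b - p * log 2 * j) := by
    rw [rpow_def_of_pos two_pos, ← exp_log hb0, ← exp_add, log_exp]; ring_nf
  calc _ ≤ 1 / (1 - a) * exp (3 / 2 * log b ^ 2 + exp 1 / (1 - exp (-(p * log 2)))) :=
        tsum_geometric_mul_le ha0.le ha1 (fun k ↦ prod_nonneg fun j _ ↦ by positivity)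
          fun k ↦ by simpa only [hfactor] using prod_range_one_add_exp_le hL hc k
    _ = _ := by rw [hq, mul_assoc, ← exp_add, add_comm]
end

section
/- Let (Ω, ℱ, ℙ) be a probability space, (ℱ_n)_{n∈ℕ} a filtration, and X : Ω → [0,∞) a random variable such that E[exp(α X²)] < ∞ for some α > 0. Let M := sup_n E[X | ℱ_n]. Then M ∈ L^q for every q ∈ [1,∞), and moreover there exists β > 0 such that E[exp(β M²)] < ∞ (i.e. M again has Gauss tails). -/
/-!
Doob's weak-type maximal inequality for the nonnegative martingale `E[X | ℱₙ]`, combined with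
`X ≤ t/2 + (X - t/2)⁺`, gives `t · ℙ(M > t) ≤ 2 E[(X - t/2)⁺]`, and the Gaussian integrability
of `X` bounds the right-hand side by `C exp(-α t² / 8)`. Integrating this tail against
`d exp(β t²)` (layer cake) shows `E[exp(β M²)] < ∞` for every `β < α / 8`, and Gaussian
integrability dominates every power `|M|^q`.
-/

open MeasureTheory Real Set Filter
open scoped ENNReal Topology

lemma abs_le_one_add_inv_mul_exp_mul_sq {a : ℝ} (ha : 0 < a) (x : ℝ) :
    |x| ≤ (1 + a⁻¹) * exp (a * x ^ 2) := by
  have hexp : 1 + a * x ^ 2 ≤ exp (a * x ^ 2) := by linarith [add_one_le_exp (a * x ^ 2)]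
  calc |x| ≤ 1 + x ^ 2 := by nlinarith [sq_abs x, sq_nonneg (|x| - 1)]
    _ ≤ (1 + a⁻¹) * (1 + a * x ^ 2) := by
        have hx : a⁻¹ * (a * x ^ 2) = x ^ 2 := inv_mul_cancel_left₀ ha.ne' _
        nlinarith [inv_pos.2 ha, sq_nonneg x]
    _ ≤ (1 + a⁻¹) * exp (a * x ^ 2) := by gcongr

lemma rpow_abs_le_exp_mul_exp_mul_sq {β q : ℝ} (hβ : 0 < β) (hq : 0 ≤ q) (x : ℝ) :
    |x| ^ q ≤ exp (q ^ 2 / (4 * β)) * exp (β * x ^ 2) := by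
  have hlin : |x| ^ q ≤ exp (q * |x|) := by
    rw [mul_comm, exp_mul]
    gcongr
    linarith [add_one_le_exp |x|]
  have hamgm : q * |x| ≤ q ^ 2 / (4 * β) + β * x ^ 2 := by
    rw [← sq_abs x, div_add' _ _ _ (by positivity), le_div_iff₀ (by positivity)]
    nlinarith [sq_nonneg (q - 2 * β * |x|)]
  rw [← exp_add]
  exact hlin.trans (exp_le_exp.2 hamgm)

lemma integral_mul_exp_mul_sq {β : ℝ} (x : ℝ) :
    ∫ t in (0 : ℝ)..x, 2 * β * t * exp (β * t ^ 2) = exp (β * x ^ 2) - 1 := by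
  have hderiv (t : ℝ) :
      HasDerivAt (fun s => exp (β * s ^ 2)) (2 * β * t * exp (β * t ^ 2)) t := by
    convert ((hasDerivAt_pow 2 t).const_mul β).exp using 1
    ring
  have hcont : Continuous fun t : ℝ => 2 * β * t * exp (β * t ^ 2) := by fun_prop
  rw [intervalIntegral.integral_eq_sub_of_hasDerivAt (fun t _ => hderiv t)
    (hcont.intervalIntegrable 0 x)]
  simp

section

variable {Ω : Type*} {m : MeasurableSpace Ω} {μ : Measure Ω}

lemma memLp_of_integrable_exp_mul_sq {Y : Ω → ℝ} (hY : AEStronglyMeasurable Y μ) {β : ℝ}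
    (hβ : 0 < β) (h : Integrable (fun ω => exp (β * Y ω ^ 2)) μ) {p : ℝ≥0∞}
    (hp : p ≠ ∞) : MemLp Y p μ := by
  rcases eq_or_ne p 0 with rfl | hp0
  · exact memLp_zero_iff_aestronglyMeasurable.2 hY
  rw [← integrable_norm_rpow_iff hY hp0 hp]
  refine (h.const_mul (exp (p.toReal ^ 2 / (4 * β)))).mono'
    (hY.norm.aemeasurable.pow_const _).aestronglyMeasurable ?_
  filter_upwards with ω
  rw [norm_of_nonneg (by positivity), norm_eq_abs]
  exact rpow_abs_le_exp_mul_exp_mul_sq hβ ENNReal.toReal_nonneg _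

lemma integral_max_sub_le_of_integrable_exp_mul_sq {X : Ω → ℝ} {α s : ℝ} (hα : 0 < α)
    (h : Integrable (fun ω => exp (α * X ω ^ 2)) μ) (hs : 0 ≤ s) :
    ∫ ω, max (X ω - s) 0 ∂μ ≤
      (1 + (α / 2)⁻¹) * exp (-(α / 2) * s ^ 2) * ∫ ω, exp (α * X ω ^ 2) ∂μ := by
  rw [← integral_const_mul]
  refine integral_mono_of_nonneg (Eventually.of_forall fun ω => le_max_right _ _)
    (h.const_mul _) (Eventually.of_forall fun ω => max_le ?_ (by positivity))
  rcases lt_or_ge (X ω) s with hXs | hsX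
  · exact (sub_neg.2 hXs).le.trans (by positivity)
  -- `s² ≤ X²` lets the Gaussian weight `exp (α X²)` absorb `exp ((α/2) (X² + s²))`.
  have hsq : α / 2 * X ω ^ 2 ≤ -(α / 2) * s ^ 2 + α * X ω ^ 2 := by
    nlinarith [pow_le_pow_left₀ hs hsX 2]
  calc X ω - s ≤ |X ω| := by linarith [le_abs_self (X ω)]
    _ ≤ (1 + (α / 2)⁻¹) * exp (α / 2 * X ω ^ 2) :=
        abs_le_one_add_inv_mul_exp_mul_sq (half_pos hα) _
    _ ≤ (1 + (α / 2)⁻¹) * exp (-(α / 2) * s ^ 2) * exp (α * X ω ^ 2) := by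
        rw [mul_assoc, ← exp_add]; gcongr

lemma integrable_exp_mul_sq_of_mul_measureReal_lt_le [IsFiniteMeasure μ] {Y : Ω → ℝ}
    (hY : AEMeasurable Y μ) (hY0 : 0 ≤ᵐ[μ] Y) {K γ β : ℝ} (hβ : 0 < β) (hβγ : β < γ)
    (htail : ∀ t > 0, t * μ.real {ω | t < Y ω} ≤ K * exp (-γ * t ^ 2)) :
    Integrable (fun ω => exp (β * Y ω ^ 2)) μ := by
  have hcont : Continuous fun t : ℝ => 2 * β * t * exp (β * t ^ 2) := by fun_prop
  have hlayer := lintegral_comp_eq_lintegral_meas_lt_mul μ hY0 hY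
    (fun t _ => hcont.intervalIntegrable 0 t)
    ((ae_restrict_iff' measurableSet_Ioi).2 <|
      Eventually.of_forall fun t (ht : 0 < t) => by positivity)
  simp_rw [integral_mul_exp_mul_sq] at hlayer
  have hbound : ∀ t > 0, μ {ω | t < Y ω} * ENNReal.ofReal (2 * β * t * exp (β * t ^ 2)) ≤
      ENNReal.ofReal (2 * β * K * exp (-(γ - β) * t ^ 2)) := fun t ht => by
    rw [← ofReal_measureReal, ← ENNReal.ofReal_mul measureReal_nonneg]
    refine ENNReal.ofReal_le_ofReal ?_
    calc μ.real {ω | t < Y ω} * (2 * β * t * exp (β * t ^ 2))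
        = t * μ.real {ω | t < Y ω} * (2 * β * exp (β * t ^ 2)) := by ring
      _ ≤ K * exp (-γ * t ^ 2) * (2 * β * exp (β * t ^ 2))  :=
          mul_le_mul_of_nonneg_right (htail t ht) (by positivity)
      _ = 2 * β * K * exp (-(γ - β) * t ^ 2) := by
        rw [mul_mul_mul_comm, mul_comm K, mul_assoc, ← exp_add]; ring_nf
  have hfin : ∫⁻ ω, ENNReal.ofReal (exp (β * Y ω ^ 2) - 1) ∂μ < ∞ := by
    rw [hlayer]
    refine (setLIntegral_mono' measurableSet_Ioi fun t ht => hbound t ht).trans_lt ?_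
    exact (setLIntegral_le_lintegral _ _).trans_lt
      ((integrable_exp_neg_mul_sq (sub_pos.2 hβγ)).const_mul _).lintegral_lt_top
  have hmeas : AEStronglyMeasurable (fun ω => exp (β * Y ω ^ 2) - 1) μ := by fun_prop
  have hsub : Integrable (fun ω => exp (β * Y ω ^ 2) - 1) μ :=
    ⟨hmeas, (hasFiniteIntegral_iff_ofReal (Eventually.of_forall fun ω => by
      simpa using one_le_exp (by positivity : 0 ≤ β * Y ω ^ 2))).2 hfin⟩
  exact (hsub.add (integrable_const 1)).congr <|
    Eventually.of_forall fun ω => sub_add_cancel _ _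

section Maximal

open Finset

lemma mul_measureReal_le_setIntegral_condExp [IsFiniteMeasure μ] (ℱ : Filtration ℕ m)
    {X : Ω → ℝ} (hX : Integrable X μ) (hX0 : 0 ≤ᵐ[μ] X) {t : ℝ} (ht : 0 ≤ t)
    (n : ℕ) :
    t * μ.real {ω | t ≤ (range (n + 1)).sup' nonempty_range_add_one
        fun k => (μ[X|ℱ k])⁺ ω} ≤
      ∫ ω in {ω | t ≤ (range (n + 1)).sup' nonempty_range_add_one
        fun k => (μ[X|ℱ k])⁺ ω}, X ω ∂μ := by
  set f : ℕ → Ω → ℝ := fun k => μ[X|ℱ k]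
  set A := {ω | t ≤ (range (n + 1)).sup' nonempty_range_add_one fun k => f⁺ k ω}
  have hsub : Submartingale f⁺ ℱ μ := (martingale_condExp X ℱ μ).submartingale.pos
  have hA : MeasurableSet[ℱ n] A := by
    let _ : MeasurableSpace Ω := ℱ n
    exact measurableSet_le measurable_const <| measurable_range_sup'' fun k hk =>
      (hsub.stronglyMeasurable k).measurable.le (ℱ.mono hk)
  have hpos : f⁺ n =ᵐ[μ] f n := (condExp_nonneg hX0).mono fun ω hω => max_eq_left hω
  have hint : ∫ ω in A, f⁺ n ω ∂μ = ∫ ω in A, X ω ∂μ := by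
    rw [setIntegral_congr_ae (ℱ.le n _ hA) (hpos.mono fun ω hω _ => hω)]
    exact setIntegral_condExp (ℱ.le n) hX hA
  have hmax := maximal_ineq hsub (posPart_nonneg f) (ε := t.toNNReal) n
  rw [Real.coe_toNNReal t ht, hint] at hmax
  have hint_nonneg : 0 ≤ ∫ ω in A, X ω ∂μ :=
    hint ▸ setIntegral_nonneg (ℱ.le n _ hA) fun ω _ => posPart_nonneg (f n) ω
  have hreal := ENNReal.toReal_mono ENNReal.ofReal_ne_top hmax
  rwa [ENNReal.toReal_mul, ENNReal.coe_toReal, Real.coe_toNNReal t ht, ← measureReal_def,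
    ENNReal.toReal_ofReal hint_nonneg] at hreal

lemma mul_measureReal_lt_iSup_condExp_le [IsFiniteMeasure μ] (ℱ : Filtration ℕ m)
    {X : Ω → ℝ} (hX : Integrable X μ) (hX0 : 0 ≤ᵐ[μ] X) {s t : ℝ} (ht : 0 ≤ t)
    (hst : s ≤ t) :
    (t - s) * μ.real {ω | t < ⨆ n, μ[X|ℱ n] ω} ≤ ∫ ω, max (X ω - s) 0 ∂μ := by
  set A : ℕ → Set Ω := fun n =>
    {ω | t ≤ (range (n + 1)).sup' nonempty_range_add_one fun k => (μ[X|ℱ k])⁺ ω}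
  have hexcess : Integrable (fun ω => max (X ω - s) 0) μ :=
    (hX.sub (integrable_const s)).pos_part
  have hA (n : ℕ) : (t - s) * μ.real (A n) ≤ ∫ ω, max (X ω - s) 0 ∂μ := by
    have hsplit :
        ∫ ω in A n, X ω ∂μ ≤ s * μ.real (A n) + ∫ ω in A n, max (X ω - s) 0 ∂μ := by
      rw [mul_comm, ← smul_eq_mul, ← setIntegral_const,
        ← integral_add (integrable_const s).integrableOn hexcess.integrableOn]
      exact integral_mono hX.integrableOn
        ((integrable_const s).integrableOn.add hexcess.integrableOn)
        fun ω => by simp only; linarith [le_max_left (X ω - s) 0]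
    have hrest : ∫ ω in A n, max (X ω - s) 0 ∂μ ≤ ∫ ω, max (X ω - s) 0 ∂μ :=
      setIntegral_le_integral hexcess (Eventually.of_forall fun ω => le_max_right _ _)
    linarith [mul_measureReal_le_setIntegral_condExp ℱ hX hX0 ht n]
  have hmono : Monotone A := fun i j hij ω (hω : t ≤ _) =>
    show t ≤ _ from hω.trans (sup'_mono _ (range_subset_range.2 (by omega)) _)
  have hcover : {ω | t < ⨆ n, μ[X|ℱ n] ω} ⊆ ⋃ n, A n := fun ω (hω : t < _) => by
    obtain ⟨n, hn⟩ := exists_lt_of_lt_ciSup hω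
    exact mem_iUnion.2 ⟨n, hn.le.trans ((le_max_left _ _).trans
      (le_sup' (fun k => (μ[X|ℱ k])⁺ ω) (self_mem_range_succ n)))⟩
  have hlim : Tendsto (fun n => (t - s) * μ.real (A n)) atTop
      (𝓝 ((t - s) * μ.real (⋃ n, A n))) :=
    ((ENNReal.tendsto_toReal (measure_ne_top _ _)).comp
      (tendsto_measure_iUnion_atTop hmono)).const_mul _
  calc (t - s) * μ.real {ω | t < ⨆ n, μ[X|ℱ n] ω} ≤ (t - s) * μ.real (⋃ n, A n) :=
        mul_le_mul_of_nonneg_left (measureReal_mono hcover) (sub_nonneg.2 hst)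
    _ ≤ _ := le_of_tendsto' hlim hA

end Maximal

end

/-- Let `(Ω,ℱ,ℙ)` be a probability space, `(ℱ_n)` a filtration and
`X ≥ 0` a random variable with `E[exp(α X²)] < ∞` for some `α > 0`. Then
`M := sup_n E[X | ℱ_n]` lies in `L^q` for every `q ∈ [1,∞)` and again has Gauss tails:
`E[exp(β M²)] < ∞` for some `β > 0`. -/
theorem statement17 {Ω : Type*} {m : MeasurableSpace Ω} (μ : Measure Ω)
    [IsProbabilityMeasure μ] (ℱ : Filtration ℕ m)
    (X : Ω → ℝ) (hXm : Measurable X) (hX0 : ∀ ω, 0 ≤ X ω)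
    (α : ℝ) (hα : 0 < α)
    (hint : Integrable (fun ω => Real.exp (α * X ω ^ 2)) μ) :
    (∀ q : ℝ, 1 ≤ q →
      MemLp (fun ω => ⨆ n : ℕ, (μ[X|ℱ n]) ω) (ENNReal.ofReal q) μ) ∧
    ∃ β > (0:ℝ),
      Integrable (fun ω => Real.exp (β * (⨆ n : ℕ, (μ[X|ℱ n]) ω) ^ 2)) μ := by
  set M : Ω → ℝ := fun ω => ⨆ n : ℕ, (μ[X|ℱ n]) ω
  have hXint : Integrable X μ := memLp_one_iff_integrable.1 <|
    memLp_of_integrable_exp_mul_sq hXm.aestronglyMeasurable hα hint ENNReal.one_ne_top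
  have hX0' : 0 ≤ᵐ[μ] X := Eventually.of_forall hX0
  have hMm : Measurable M :=
    Measurable.iSup fun n => stronglyMeasurable_condExp.measurable.mono (ℱ.le n) le_rfl
  have hM0 : 0 ≤ᵐ[μ] M := by
    filter_upwards [ae_all_iff.2 fun n => condExp_nonneg (m := ℱ n) hX0'] with ω hω
    exact Real.iSup_nonneg hω
  have htail : ∀ t > 0, t * μ.real {ω | t < M ω} ≤
      2 * (1 + (α / 2)⁻¹) * (∫ ω, exp (α * X ω ^ 2) ∂μ) * exp (-(α / 8) * t ^ 2) := by
    intro t ht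
    have hmax := mul_measureReal_lt_iSup_condExp_le ℱ hXint hX0' ht.le (half_le_self ht.le)
    have hexcess := integral_max_sub_le_of_integrable_exp_mul_sq hα hint (half_pos ht).le
    have hexp : exp (-(α / 2) * (t / 2) ^ 2) = exp (-(α / 8) * t ^ 2) := by ring_nf
    rw [hexp] at hexcess
    linarith
  have hexpM := integrable_exp_mul_sq_of_mul_measureReal_lt_le hMm.aemeasurable hM0
    (by positivity : 0 < α / 16) (by linarith : α / 16 < α / 8) htail
  exact ⟨fun q _ => memLp_of_integrable_exp_mul_sq hMm.aestronglyMeasurable (by positivity)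
    hexpM ENNReal.ofReal_ne_top, α / 16, by positivity, hexpM⟩
end
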